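/- arXiv:2406.15176 — 12 statements merged into one kernel-verified Lean document; each statement's English description precedes it below -/
import Mathlib

section
/- Let B be a category, let G be a finite group acting on a set U of objects of B, and suppose given morphisms Γ(g, y) : y ⟶ g•y of B for all g ∈ G and y ∈ U such that: (cocycle) Γ(h·g, y) = Γ(g, y) ≫ Γ(h, g•y) for all g, h ∈ G and y ∈ U; (injectivity) for y ∈ U and g, g′ ∈ G with g•y = g′•y and Γ(g, y) = Γ(g′, y) one has g = g′; (loops) every endomorphism m : x ⟶ x of an object x ∈ U equals Γ(g, x) for some g ∈ G (necessarily with g•x = x). Then Γ(1, y) = 𝟙_y for every y ∈ U; for every x ∈ U every endomorphism of x is an isomorphism, so End_B(x) = Hom_B(x, x) is a group; and g ↦ Γ(g, x) is a bijection from the stabilizer {g ∈ G : g•x = x} onto End_B(x) satisfying Γ(h·g, x) = Γ(g, x) ≫ Γ(h, x) for g, h in the stabilizer, so the stabilizer of x in G is isomorphic as a group to End_B(x). In particular End_B(x) and End_B(g•x) are isomorphic groups for every g ∈ G. -/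
open CategoryTheory

namespace Stmt2Aux

variable {B : Type*} [Category B] {G : Type*} [Group G] {U : Set B} [MulAction G ↥U]
  (Γ : ∀ (g : G) (y : ↥U), (y : B) ⟶ ((g • y : ↥U) : B))

/-- `Γ g y` composed with the identification `g • y = y`, for `g` in the stabilizer. -/
def D (y : ↥U) (g : G) (hg : g • y = y) : (y : B) ⟶ (y : B) :=
  Γ g y ≫ eqToHom (congrArg Subtype.val hg)

lemma D_congr (y : ↥U) {g g' : G} (e : g = g') (hg : g • y = y) :
    D Γ y g hg = D Γ y g' (e ▸ hg) := by subst e; rfl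

lemma key (g : G) {y y' : ↥U} (p : y = y')
    (q : (((g • y : ↥U)) : B) = (((g • y' : ↥U)) : B)) :
    Γ g y' = eqToHom (congrArg Subtype.val p.symm) ≫ Γ g y ≫ eqToHom q := by
  subst p; simp

lemma D_mul (hcocycle : ∀ (g h : G) (y : ↥U),
      Γ (h * g) y =
        Γ g y ≫ Γ h (g • y) ≫ eqToHom (congrArg Subtype.val (mul_smul h g y).symm))
    (y : ↥U) (g h : G) (hg : g • y = y) (hh : h • y = y)
    (hhg : (h * g) • y = y) :
    D Γ y (h * g) hhg = D Γ y g hg ≫ D Γ y h hh := by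
  unfold D
  rw [hcocycle g h y, key Γ h hg (congrArg (fun z => ((h • z : ↥U) : B)) hg)]
  simp

end Stmt2Aux

open Stmt2Aux

/-- Let `B` be a category, `G` a finite group acting on a set `U` of
objects of `B`, and suppose given morphisms `Γ(g, y) : y ⟶ g • y` for all `g ∈ G`,
`y ∈ U`, satisfying the cocycle condition, injectivity, and the condition that every
endomorphism of an object of `U` is of the form `Γ(g, x)`.  Then `Γ(1, y) = 𝟙 y`;
every endomorphism of every `x ∈ U` is an isomorphism; `g ↦ Γ(g, x)` induces a group
isomorphism from the stabilizer of `x` in `G` onto `End x` (with Mathlib's convention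
`f * g = g ≫ f` in `End x`); and `End x` and `End (g • x)` are isomorphic groups. -/
theorem stmt_2 {B : Type*} [Category B] {G : Type*} [Group G] [Finite G]
    (U : Set B) [MulAction G ↥U]
    (Γ : ∀ (g : G) (y : ↥U), (y : B) ⟶ ((g • y : ↥U) : B))
    (hcocycle : ∀ (g h : G) (y : ↥U),
      Γ (h * g) y =
        Γ g y ≫ Γ h (g • y) ≫ eqToHom (congrArg Subtype.val (mul_smul h g y).symm))
    (hinj : ∀ (y : ↥U) (g g' : G) (h : g • y = g' • y),
      Γ g y ≫ eqToHom (congrArg Subtype.val h) = Γ g' y → g = g')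
    (hloops : ∀ (x : ↥U) (m : (x : B) ⟶ (x : B)),
      ∃ (g : G) (hg : g • x = x), Γ g x ≫ eqToHom (congrArg Subtype.val hg) = m) :
    (∀ y : ↥U, Γ 1 y ≫ eqToHom (congrArg Subtype.val (one_smul G y)) = 𝟙 (y : B)) ∧
    (∀ (x : ↥U) (m : (x : B) ⟶ (x : B)), IsIso m) ∧
    (∀ x : ↥U, ∃ e : MulAction.stabilizer G x ≃* End (x : B),
      ∀ g : MulAction.stabilizer G x,
        e g = Γ (g : G) x ≫
          eqToHom (congrArg Subtype.val (MulAction.mem_stabilizer_iff.mp g.2))) ∧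
    (∀ (x : ↥U) (g : G), Nonempty (End (x : B) ≃* End ((g • x : ↥U) : B))) := by
  -- injectivity of `D`
  have Dinj : ∀ (y : ↥U) (g g' : G) (hg : g • y = y) (hg' : g' • y = y),
      D Γ y g hg = D Γ y g' hg' → g = g' := by
    intro y g g' hg hg' h
    apply hinj y g g' (hg.trans hg'.symm)
    have h2 := congrArg (fun f => f ≫ eqToHom (congrArg Subtype.val hg'.symm)) h
    simp only [D] at h2
    simpa using h2
  -- `D 1 = 𝟙`
  have hone : ∀ y : ↥U, D Γ y 1 (one_smul G y) = 𝟙 (y : B) := by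
    intro y
    obtain ⟨g, hg, hΓ⟩ := hloops y (𝟙 (y : B))
    have hΓ' : D Γ y g hg = 𝟙 (y : B) := hΓ
    have hg1 : (g * 1) • y = y := by rw [mul_one]; exact hg
    have h2 : D Γ y (g * 1) hg1 = D Γ y 1 (one_smul G y) ≫ D Γ y g hg :=
      D_mul Γ hcocycle y 1 g (one_smul G y) hg hg1
    have h3 : D Γ y (g * 1) hg1 = 𝟙 (y : B) := by
      rw [D_congr Γ y (mul_one g)]; exact hΓ'
    rw [h3, hΓ'] at h2
    simpa using h2.symm
  -- every endomorphism is an isomorphism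
  have hiso : ∀ (x : ↥U) (m : (x : B) ⟶ (x : B)), IsIso m := by
    intro x m
    obtain ⟨g, hg, hΓ⟩ := hloops x m
    have hΓ' : D Γ x g hg = m := hΓ
    have hginv : g⁻¹ • x = x := inv_smul_eq_iff.mpr hg.symm
    have h1 : (g⁻¹ * g) • x = x := by rw [inv_mul_cancel]; exact one_smul G x
    have h2 : (g * g⁻¹) • x = x := by rw [mul_inv_cancel]; exact one_smul G x
    have hcomp1 : D Γ x g hg ≫ D Γ x g⁻¹ hginv = 𝟙 (x : B) := by
      have := D_mul Γ hcocycle x g g⁻¹ hg hginv h1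
      rw [D_congr Γ x (inv_mul_cancel g)] at this
      exact this.symm.trans (hone x)
    have hcomp2 : D Γ x g⁻¹ hginv ≫ D Γ x g hg = 𝟙 (x : B) := by
      have := D_mul Γ hcocycle x g⁻¹ g hginv hg h2
      rw [D_congr Γ x (mul_inv_cancel g)] at this
      exact this.symm.trans (hone x)
    rw [← hΓ']
    exact ⟨D Γ x g⁻¹ hginv, hcomp1, hcomp2⟩
  -- the group isomorphism with the stabilizer
  have hstab : ∀ x : ↥U, ∃ e : MulAction.stabilizer G x ≃* End (x : B),
      ∀ g : MulAction.stabilizer G x,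
        e g = Γ (g : G) x ≫
          eqToHom (congrArg Subtype.val (MulAction.mem_stabilizer_iff.mp g.2)) := by
    intro x
    let f : MulAction.stabilizer G x → End (x : B) :=
      fun s => D Γ x (s : G) (MulAction.mem_stabilizer_iff.mp s.2)
    have finj : Function.Injective f := by
      intro a b h
      exact Subtype.ext (Dinj x _ _ _ _ h)
    have fsurj : Function.Surjective f := by
      intro m
      obtain ⟨g, hg, hΓ⟩ := hloops x m
      exact ⟨⟨g, MulAction.mem_stabilizer_iff.mpr hg⟩, hΓ⟩
    have fmul : ∀ a b : MulAction.stabilizer G x, f (a * b) = f a * f b := by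
      intro a b
      show D Γ x ((a : G) * (b : G)) _ = _
      rw [D_mul Γ hcocycle x (b : G) (a : G) (MulAction.mem_stabilizer_iff.mp b.2)
        (MulAction.mem_stabilizer_iff.mp a.2)]
      rfl
    exact ⟨MulEquiv.mk' (Equiv.ofBijective f ⟨finj, fsurj⟩) fmul, fun g => rfl⟩
  refine ⟨fun y => hone y, hiso, hstab, ?_⟩
  intro x g
  obtain ⟨ex, _⟩ := hstab x
  obtain ⟨egx, _⟩ := hstab (g • x)
  have hrel : MulAction.orbitRel G ↥U x (g • x) :=
    (MulAction.orbitRel_apply).mpr ⟨g⁻¹, by simp⟩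
  exact ⟨(ex.symm.trans (MulAction.stabilizerEquivStabilizerOfOrbitRel hrel)).trans egx⟩
end

section
/- Let B and X be topological spaces with X Hausdorff, and let s, t : B → X be continuous maps. Assume that every point x ∈ X has an open neighborhood N(x) such that for every compact subset K ⊆ X the set s⁻¹(closure(N(x))) ∩ t⁻¹(K) is compact. Then the map b ↦ (s(b), t(b)) from B to X × X is proper in the sense that the preimage of every compact subset of X × X is compact. -/
/-- Let `s, t : B → X` be continuous maps with `X` Hausdorff.  Assume
every `x ∈ X` has an open neighbourhood `N x` such that for every compact `K ⊆ X` the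
set `s⁻¹(closure (N x)) ∩ t⁻¹(K)` is compact.  Then `b ↦ (s b, t b)` is a proper map:
the preimage of every compact subset of `X × X` is compact. -/
theorem stmt_4 {B X : Type*} [TopologicalSpace B] [TopologicalSpace X] [T2Space X]
    (s t : B → X) (hs : Continuous s) (ht : Continuous t)
    (hN : ∀ x : X, ∃ N : Set X, IsOpen N ∧ x ∈ N ∧
      ∀ K : Set X, IsCompact K → IsCompact (s ⁻¹' closure N ∩ t ⁻¹' K)) :
    ∀ K : Set (X × X), IsCompact K → IsCompact ((fun b => (s b, t b)) ⁻¹' K) := by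
  intro K hK
  choose N hNopen hNmem hNcomp using hN
  have hK1 : IsCompact (Prod.fst '' K) := hK.image continuous_fst
  have hK2 : IsCompact (Prod.snd '' K) := hK.image continuous_snd
  obtain ⟨I, hI⟩ := hK1.elim_finite_subcover (fun x : X => N x) (fun x => hNopen x)
    (fun x hx => Set.mem_iUnion.2 ⟨x, hNmem x⟩)
  have hbig : IsCompact (⋃ i ∈ I, (s ⁻¹' closure (N i) ∩ t ⁻¹' (Prod.snd '' K))) :=
    I.isCompact_biUnion (fun i _ => hNcomp i _ hK2)
  refine hbig.of_isClosed_subset ?_ ?_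
  · exact (hK.isClosed.preimage (hs.prodMk ht))
  · intro b hb
    have h1 : s b ∈ Prod.fst '' K := ⟨(s b, t b), hb, rfl⟩
    obtain ⟨i, hiI, hbi⟩ := Set.mem_iUnion₂.1 (hI h1)
    exact Set.mem_iUnion₂.2 ⟨i, hiI, subset_closure hbi, ⟨(s b, t b), hb, rfl⟩⟩
end

section
/- Let Y be a normal topological space, S ⊆ Y a closed subset, A a finite set, and (F_i)_{i∈A} a family of open subsets of Y with S ⊆ ⋃_{i∈A} F_i. Then there exist open subsets F′_I ⊆ Y, indexed by the nonempty subsets I ⊆ A, such that: (i) closure(F′_I) ⊆ ⋂_{i∈I} F_i for every I; (ii) if closure(F′_I) ∩ closure(F′_J) ≠ ∅ then I ⊆ J or J ⊆ I; (iii) S ⊆ ⋃_{∅≠I⊆A} F′_I. Moreover, if in addition closed subsets C_i ⊆ F_i with S ⊆ ⋃_{i∈A} C_i are given, then the sets F′_I can be chosen so that additionally (iv) F′_I ∩ C_j = ∅ for every j ∈ A ∖ I. -/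
/-- Iterated shrinking chain between a closed set and an open superset. -/
lemma chain_aux {Y : Type*} [TopologicalSpace Y] [NormalSpace Y] (C F : Set Y)
    (hC : IsClosed C) (hF : IsOpen F) (hCF : C ⊆ F) :
    ∃ W : ℕ → Set Y, (∀ m, IsOpen (W m)) ∧ C ⊆ W 0 ∧
      (∀ m, closure (W m) ⊆ W (m + 1)) ∧ (∀ m, closure (W m) ⊆ F) := by
  have step : ∀ U : Set Y, IsClosed U → U ⊆ F →
      ∃ V : Set Y, IsOpen V ∧ U ⊆ V ∧ closure V ⊆ F := fun U hU hUF =>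
    normal_exists_closure_subset hU hF hUF
  choose! g hg1 hg2 hg3 using step
  refine ⟨fun m => Nat.rec (g C) (fun _ U => g (closure U)) m, ?_, hg2 C hC hCF, ?_, ?_⟩ <;>
  · have key : ∀ m, IsOpen (Nat.rec (g C) (fun _ U => g (closure U)) m : Set Y) ∧
        closure (Nat.rec (g C) (fun _ U => g (closure U)) m : Set Y) ⊆ F := by
      intro m
      induction m with
      | zero => exact ⟨hg1 C hC hCF, hg3 C hC hCF⟩
      | succ n ih => exact ⟨hg1 _ isClosed_closure ih.2, hg3 _ isClosed_closure ih.2⟩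
    first
    | exact fun m => (key m).1
    | exact fun m => hg2 _ isClosed_closure (key m).2
    | exact fun m => (key m).2

lemma comb_aux {A : Type*} [Fintype A] (T : ℕ → Finset A)
    (hmono : ∀ k, T k ⊆ T (k + 1)) (h0 : (T 0).Nonempty) :
    ∃ k, 1 ≤ k ∧ T k = T (k - 1) ∧ (T (k - 1)).card = k := by
  classical
  have hex : ∃ k, (T k).card ≤ k := ⟨Fintype.card A, Finset.card_le_univ _⟩
  set k := Nat.find hex with hkdef
  have hk : (T k).card ≤ k := Nat.find_spec hex
  have hk1 : 1 ≤ k := by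
    by_contra h
    have hk0 : k = 0 := by omega
    rw [hk0, Nat.le_zero, Finset.card_eq_zero] at hk
    exact h0.ne_empty hk
  have hlt : ¬ (T (k - 1)).card ≤ k - 1 := Nat.find_min hex (by omega)
  have hsub : T (k - 1) ⊆ T k := by
    have := hmono (k - 1)
    rwa [Nat.sub_add_cancel hk1] at this
  have hcard : (T (k - 1)).card = k := le_antisymm ((Finset.card_le_card hsub).trans hk) (by omega)
  refine ⟨k, hk1, (Finset.eq_of_subset_of_card_le hsub (by omega)).symm, hcard⟩

lemma cover_red {Y : Type*} [TopologicalSpace Y] [NormalSpace Y]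
    {A : Type*} [Finite A] (S : Set Y)
    (F : A → Set Y) (hFopen : ∀ i, IsOpen (F i))
    (C : A → Set Y) (hCcl : ∀ i, IsClosed (C i)) (hCF : ∀ i, C i ⊆ F i)
    (hCcov : S ⊆ ⋃ i, C i) :
    ∃ F' : Finset A → Set Y,
      (∀ I : Finset A, I.Nonempty → IsOpen (F' I)) ∧
      (∀ I : Finset A, I.Nonempty → closure (F' I) ⊆ ⋂ i ∈ I, F i) ∧
      (∀ I J : Finset A, I.Nonempty → J.Nonempty →
        (closure (F' I) ∩ closure (F' J)).Nonempty → I ⊆ J ∨ J ⊆ I) ∧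
      (S ⊆ ⋃ (I : Finset A) (_ : I.Nonempty), F' I) ∧
      (∀ I : Finset A, I.Nonempty → ∀ j ∉ I, F' I ∩ C j = ∅) := by
  classical
  have : Fintype A := Fintype.ofFinite A
  choose W hWopen hW0 hWstep hWF using fun i =>
    chain_aux (C i) (F i) (hCcl i) (hFopen i) (hCF i)
  have hmono : ∀ (i : A) (a b : ℕ), a ≤ b → W i a ⊆ W i b := by
    intro i a b hab
    induction hab with
    | refl => exact Set.Subset.rfl
    | step h ih => exact ih.trans (subset_closure.trans (hWstep i _))
  have hclmono : ∀ (i : A) (a b : ℕ), a < b → closure (W i a) ⊆ W i b :=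
    fun i a b h => (hWstep i a).trans (hmono i (a + 1) b h)
  set F' : Finset A → Set Y := fun I =>
    (⋂ i ∈ I, W i (2 * I.card - 1)) \ (⋃ j ∈ Iᶜ, closure (W j (2 * I.card))) with hF'
  have hF'subW : ∀ (I : Finset A) (i : A), i ∈ I → F' I ⊆ W i (2 * I.card - 1) := by
    intro I i hi x hx
    exact Set.mem_iInter₂.mp hx.1 i hi
  have hF'avoid : ∀ (I : Finset A) (j : A), j ∉ I → F' I ⊆ (W j (2 * I.card))ᶜ := by
    intro I j hj x hx hxW
    exact hx.2 (Set.mem_biUnion (Finset.mem_compl.mpr hj) (subset_closure hxW))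
  have key : ∀ I J : Finset A, I.Nonempty → I.card ≤ J.card → ¬ I ⊆ J →
      closure (F' I) ∩ closure (F' J) = ∅ := by
    intro I J hI hcard hIJ
    obtain ⟨i, hiI, hiJ⟩ := Finset.not_subset.mp hIJ
    have hIc : 1 ≤ I.card := Finset.card_pos.mpr hI
    have h1 : closure (F' I) ⊆ W i (2 * J.card) := by
      refine (closure_mono (hF'subW I i hiI)).trans ?_
      exact (hclmono i (2 * I.card - 1) (2 * I.card) (by omega)).trans
        (hmono i (2 * I.card) (2 * J.card) (by omega))
    have h2 : closure (F' J) ⊆ (W i (2 * J.card))ᶜ :=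
      closure_minimal (hF'avoid J i hiJ) (hWopen i _).isClosed_compl
    ext x
    simp only [Set.mem_inter_iff, Set.mem_empty_iff_false, iff_false, not_and]
    intro hxI hxJ
    exact h2 hxJ (h1 hxI)
  refine ⟨F', ?_, ?_, ?_, ?_, ?_⟩
  · intro I _
    exact ((isOpen_biInter_finset fun i _ => hWopen i _).sdiff
      (Set.Finite.isClosed_biUnion (Iᶜ : Finset A).finite_toSet fun j _ => isClosed_closure))
  · intro I hI
    refine Set.subset_iInter₂ fun i hi => ?_
    exact (closure_mono (hF'subW I i hi)).trans (hWF i _)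
  · intro I J hI hJ hne
    by_contra h
    push_neg at h
    rcases le_total I.card J.card with hc | hc
    · exact hne.ne_empty (key I J hI hc h.1)
    · refine hne.ne_empty ?_
      rw [Set.inter_comm]
      exact key J I hJ hc h.2
  · intro x hx
    obtain ⟨i0, hi0⟩ := Set.mem_iUnion.mp (hCcov hx)
    set T : ℕ → Finset A :=
      fun k => Finset.univ.filter (fun i => x ∈ closure (W i (2 * k))) with hT
    have hTm : ∀ k, T k ⊆ T (k + 1) := by
      intro k j hj
      simp only [hT, Finset.mem_filter, Finset.mem_univ, true_and] at hj ⊢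
      exact closure_mono (hmono j _ _ (by omega)) hj
    have hT0 : (T 0).Nonempty := by
      refine ⟨i0, ?_⟩
      simp only [hT, Finset.mem_filter, Finset.mem_univ, true_and]
      exact subset_closure (hW0 i0 hi0)
    obtain ⟨k, hk1, hkeq, hkcard⟩ := comb_aux T hTm hT0
    have hNE : (T (k - 1)).Nonempty := Finset.card_pos.mp (by omega)
    refine Set.mem_iUnion.mpr ⟨T (k - 1), Set.mem_iUnion.mpr ⟨hNE, ?_, ?_⟩⟩
    · refine Set.mem_iInter₂.mpr fun i hi => ?_
      have hxi : x ∈ closure (W i (2 * (k - 1))) := by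
        have := Finset.mem_filter.mp hi
        exact this.2
      rw [hkcard]
      exact hclmono i (2 * (k - 1)) (2 * k - 1) (by omega) hxi
    · intro hxU
      obtain ⟨j, hj, hxj⟩ := Set.mem_iUnion₂.mp hxU
      have : j ∈ T k := by
        rw [hkcard] at hxj
        exact Finset.mem_filter.mpr ⟨Finset.mem_univ _, hxj⟩
      rw [hkeq] at this
      exact (Finset.mem_compl.mp hj) this
  · intro I hI j hj
    rw [Set.eq_empty_iff_forall_notMem]
    intro x ⟨hx1, hx2⟩
    exact hF'avoid I j hj hx1 (hmono j 0 _ (Nat.zero_le _) (hW0 j hx2))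

/-- **cover reduction.** Let `Y` be normal, `S ⊆ Y` closed, `A` finite and
`(F i)` an open cover of `S`.  Then there is a cover reduction `(F' I)` indexed by the
nonempty finite subsets `I ⊆ A` with: (i) `closure (F' I) ⊆ ⋂ i ∈ I, F i`;
(ii) closures intersect only for nested index sets; (iii) `S ⊆ ⋃ I, F' I`.
Moreover, given closed sets `C i ⊆ F i` covering `S`, the `F' I` may in addition be
chosen with (iv) `F' I ∩ C j = ∅` for `j ∉ I`. -/
theorem stmt_6 {Y : Type*} [TopologicalSpace Y] [NormalSpace Y]
    {A : Type*} [Finite A] (S : Set Y) (hS : IsClosed S)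
    (F : A → Set Y) (hFopen : ∀ i, IsOpen (F i)) (hFcov : S ⊆ ⋃ i, F i) :
    (∃ F' : Finset A → Set Y,
      (∀ I : Finset A, I.Nonempty → IsOpen (F' I)) ∧
      (∀ I : Finset A, I.Nonempty → closure (F' I) ⊆ ⋂ i ∈ I, F i) ∧
      (∀ I J : Finset A, I.Nonempty → J.Nonempty →
        (closure (F' I) ∩ closure (F' J)).Nonempty → I ⊆ J ∨ J ⊆ I) ∧
      S ⊆ ⋃ (I : Finset A) (_ : I.Nonempty), F' I) ∧
    (∀ C : A → Set Y, (∀ i, IsClosed (C i)) → (∀ i, C i ⊆ F i) → S ⊆ ⋃ i, C i →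
      ∃ F' : Finset A → Set Y,
        (∀ I : Finset A, I.Nonempty → IsOpen (F' I)) ∧
        (∀ I : Finset A, I.Nonempty → closure (F' I) ⊆ ⋂ i ∈ I, F i) ∧
        (∀ I J : Finset A, I.Nonempty → J.Nonempty →
          (closure (F' I) ∩ closure (F' J)).Nonempty → I ⊆ J ∨ J ⊆ I) ∧
        (S ⊆ ⋃ (I : Finset A) (_ : I.Nonempty), F' I) ∧
        (∀ I : Finset A, I.Nonempty → ∀ j ∉ I, F' I ∩ C j = ∅)) := by
  constructor
  · obtain ⟨v, hvcov, hvopen, hvcl⟩ := exists_subset_iUnion_closure_subset hS hFopen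
      (fun x _ => Set.toFinite _) hFcov
    obtain ⟨F', h1, h2, h3, h4, _⟩ := cover_red S F hFopen (fun i => closure (v i))
      (fun i => isClosed_closure) hvcl
      (hvcov.trans (Set.iUnion_mono fun i => subset_closure))
    exact ⟨F', h1, h2, h3, h4⟩
  · intro C hCcl hCF hCcov
    exact cover_red S F hFopen C hCcl hCF hCcov
end

section
/- Let B be a category that admits a groupoid completion. Then: (1) for every object x of B, every endomorphism α : x ⟶ x is an isomorphism, so End_B(x) is a group; (2) for every morphism m : x ⟶ y of B and every α : x ⟶ x there is a unique β : y ⟶ y with m ≫ β = α ≫ m, and the assignment φ_m : α ↦ β is a group isomorphism from End_B(x) onto End_B(y); (3) consequently End_B(x) and End_B(y) are isomorphic groups whenever x ∼_B y. -/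
open CategoryTheory Relation

/-- Let `B` be a category admitting a groupoid completion `(D, ι)`:
`D` is a groupoid, `ι : B ⥤ D` is injective on morphisms, bijective on objects,
matches the equivalence relations generated by the morphisms, and induces bijections
`Hom(x, x) → Hom(ι x, ι x)`.  Then: (1) every endomorphism in `B` is an isomorphism,
so each `End x` is a group; (2) for every `m : x ⟶ y` and every `α : x ⟶ x` there is a
unique `β : y ⟶ y` with `m ≫ β = α ≫ m`, and `α ↦ β` is a group isomorphism
`End x ≃* End y` (with Mathlib's convention `f * g = g ≫ f`); (3) hence `End x` and
`End y` are isomorphic groups whenever `x ∼_B y`. -/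
theorem stmt_7 {B : Type*} [Category B] {D : Type*} [Groupoid D] (ι : B ⥤ D)
    (hobj : Function.Bijective ι.obj)
    (hmor : ∀ x y : B, Function.Injective fun m : x ⟶ y => ι.map m)
    (hrel : ∀ x y : B,
      EqvGen (fun a b : B => Nonempty (a ⟶ b)) x y ↔
        EqvGen (fun a b : D => Nonempty (a ⟶ b)) (ι.obj x) (ι.obj y))
    (hend : ∀ x : B, Function.Bijective fun m : x ⟶ x => ι.map m) :
    (∀ (x : B) (α : x ⟶ x), IsIso α) ∧
    (∀ (x y : B) (m : x ⟶ y),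
      (∀ α : x ⟶ x, ∃! β : y ⟶ y, m ≫ β = α ≫ m) ∧
      ∃ φ : End x ≃* End y, ∀ α : x ⟶ x, m ≫ φ α = α ≫ m) ∧
    (∀ x y : B, EqvGen (fun a b : B => Nonempty (a ⟶ b)) x y →
      Nonempty (End x ≃* End y)) := by
  -- monoid isomorphism End x ≃* End (ι.obj x)
  have e : ∀ x : B, { e : End x ≃* End (ι.obj x) // ∀ α : End x, e α = ι.map α } := by
    intro x
    exact ⟨MulEquiv.ofBijective
      (show End x →* End (ι.obj x) from
        ⟨⟨fun m : End x => (ι.map m : End (ι.obj x)), ι.map_id x⟩,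
          fun f g => by simp [End.mul_def]⟩) (hend x), fun α => rfl⟩
  -- the key construction for part (2)
  have key : ∀ (x y : B) (m : x ⟶ y),
      ∃ φ : End x ≃* End y, ∀ α : x ⟶ x, m ≫ φ α = α ≫ m := by
    intro x y m
    obtain ⟨ex, hex⟩ := e x
    obtain ⟨ey, hey⟩ := e y
    refine ⟨ex.trans (((asIso (ι.map m)).conj).trans ey.symm), fun α => ?_⟩
    apply hmor x y
    show ι.map (m ≫ _) = ι.map (α ≫ m)
    rw [ι.map_comp, ι.map_comp]
    have : ι.map ((ey.symm) ((asIso (ι.map m)).conj (ex α)))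
        = (asIso (ι.map m)).conj (ex α) := by
      rw [← hey]; simp
    rw [MulEquiv.trans_apply, MulEquiv.trans_apply, this, hex, Iso.conj_apply]
    simp
  refine ⟨?_, fun x y m => ⟨fun α => ?_, key x y m⟩, fun x y h => ?_⟩
  · intro x α
    obtain ⟨α', hα'⟩ := (hend x).2 (Groupoid.inv (ι.map α))
    simp only at hα'
    refine ⟨α', (hend x).1 ?_, (hend x).1 ?_⟩ <;>
      simp [ι.map_comp, hα', ι.map_id]
  · obtain ⟨φ, hφ⟩ := key x y m
    refine ⟨φ α, hφ α, fun β' hβ' => ?_⟩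
    apply hend y |>.1
    have h1 : ι.map m ≫ ι.map β' = ι.map α ≫ ι.map m := by
      rw [← ι.map_comp, ← ι.map_comp, hβ']
    have h2 : ι.map m ≫ ι.map (φ α) = ι.map α ≫ ι.map m := by
      rw [← ι.map_comp, ← ι.map_comp, hφ α]
    simp only
    calc ι.map β' = Groupoid.inv (ι.map m) ≫ (ι.map m ≫ ι.map β') := by simp
    _ = Groupoid.inv (ι.map m) ≫ (ι.map m ≫ ι.map (φ α)) := by rw [h1, h2]
    _ = ι.map (φ α) := by simp
  · induction h with
    | rel a b hab => obtain ⟨m⟩ := hab; exact ⟨(key a b m).choose⟩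
    | refl a => exact ⟨MulEquiv.refl _⟩
    | symm a b _ ih => exact ⟨ih.some.symm⟩
    | trans a b c _ _ ih1 ih2 => exact ⟨ih1.some.trans ih2.some⟩
end

section
/- Let B be a nonsingular (thin) category. Then B admits a groupoid completion (Ĝ, ι), which may be taken to have the same objects as B, with exactly one morphism from x to y when x ∼_B y and no morphism from x to y otherwise. Every groupoid completion of B is nonsingular. Moreover, the completion is unique up to functorial isomorphism: for any two groupoid completions (Ĝ₁, ι₁) and (Ĝ₂, ι₂) of B there is an isomorphism of categories F : Ĝ₁ → Ĝ₂ with ι₁ ⋙ F = ι₂. -/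
open CategoryTheory Relation

universe v u

/-- Data for a candidate groupoid completion of a category `B`: a groupoid together
with a functor from `B` into it. -/
structure GroupoidCompletionData (B : Type u) [Category.{v} B] where
  /-- the underlying objects of the completion -/
  carrier : Type u
  /-- the groupoid structure on the completion -/
  [str : Groupoid.{v} carrier]
  /-- the comparison functor -/
  func : B ⥤ carrier

attribute [instance] GroupoidCompletionData.str

/-- `(c.carrier, c.func)` is a groupoid completion of `B`: the functor is injective on
morphisms, bijective on objects, identifies the equivalence relations generated by the
morphisms on both sides, and induces bijections `Hom(x, x) → Hom(ι x, ι x)`. -/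
def GroupoidCompletionData.IsCompletion {B : Type u} [Category.{v} B]
    (c : GroupoidCompletionData B) : Prop :=
  Function.Bijective c.func.obj ∧
  (∀ x y : B, Function.Injective fun m : x ⟶ y => c.func.map m) ∧
  (∀ x y : B, EqvGen (fun a b : B => Nonempty (a ⟶ b)) x y ↔
      EqvGen (fun a b : c.carrier => Nonempty (a ⟶ b)) (c.func.obj x) (c.func.obj y)) ∧
  (∀ x : B, Function.Bijective fun m : x ⟶ x => c.func.map m)

/-- The explicit groupoid completion of a thin category: same objects, with homs given
by (proofs of) the equivalence relation generated by the homs of `B`. -/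
def GC (B : Type u) : Type u := B

instance gcGroupoid (B : Type u) [Category.{v} B] : Groupoid.{v} (GC B) where
  Hom a b := ULift.{v} (PLift (EqvGen (fun a b : B => Nonempty (a ⟶ b)) a b))
  id a := ⟨⟨EqvGen.refl a⟩⟩
  comp f g := ⟨⟨f.down.down.trans _ _ _ g.down.down⟩⟩
  inv f := ⟨⟨f.down.down.symm _ _⟩⟩

instance gcSubsingleton (B : Type u) [Category.{v} B] (a b : GC B) :
    Subsingleton (a ⟶ b) :=
  ⟨fun ⟨⟨_⟩⟩ ⟨⟨_⟩⟩ => rfl⟩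

/-- The comparison functor into the explicit groupoid completion. -/
def gcFunctor (B : Type u) [Category.{v} B] : B ⥤ GC B where
  obj a := a
  map f := ⟨⟨EqvGen.rel _ _ ⟨f⟩⟩⟩

lemma groupoid_eqv {G : Type*} [Groupoid G] (a b : G) :
    EqvGen (fun x y : G => Nonempty (x ⟶ y)) a b ↔ Nonempty (a ⟶ b) := by
  constructor
  · intro h
    induction h with
    | rel _ _ h => exact h
    | refl => exact ⟨𝟙 _⟩
    | symm _ _ _ ih => exact ⟨Groupoid.inv ih.some⟩
    | trans _ _ _ _ _ ih1 ih2 => exact ⟨ih1.some ≫ ih2.some⟩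
  · exact fun h => EqvGen.rel _ _ h

lemma completion_thin {B : Type u} [Category.{v} B] [Quiver.IsThin B]
    (c : GroupoidCompletionData B) (hc : c.IsCompletion) (x y : c.carrier) :
    Subsingleton (x ⟶ y) := by
  obtain ⟨hobj, _, _, hend⟩ := hc
  obtain ⟨a, rfl⟩ := hobj.2 x
  have hss : Subsingleton (c.func.obj a ⟶ c.func.obj a) :=
    (Equiv.ofBijective _ (hend a)).symm.subsingleton
  constructor
  intro f g
  have h1 : f ≫ Groupoid.inv g = g ≫ Groupoid.inv g := Subsingleton.elim _ _
  calc f = f ≫ Groupoid.inv g ≫ g := by simp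
    _ = g ≫ Groupoid.inv g ≫ g := by rw [← Category.assoc, h1, Category.assoc]
    _ = g := by simp

lemma gc_isCompletion (B : Type u) [Category.{v} B] [Quiver.IsThin B] :
    (GroupoidCompletionData.mk (GC B) (gcFunctor B)).IsCompletion := by
  refine ⟨Function.bijective_id, fun x y => ?_, fun x y => ?_, fun x => ?_⟩
  · intro m₁ m₂ _
    exact Subsingleton.elim m₁ m₂
  · rw [groupoid_eqv]
    exact ⟨fun h => ⟨⟨⟨h⟩⟩⟩, fun ⟨h⟩ => h.down.down⟩
  · refine ⟨fun m₁ m₂ _ => Subsingleton.elim m₁ m₂, fun g => ⟨𝟙 x, ?_⟩⟩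
    exact Subsingleton.elim _ _

/-- A nonsingular (thin) category `B` has a groupoid completion, which
may be taken to have the same objects as `B`, with exactly one morphism `x ⟶ y` when
`x ∼_B y` and none otherwise.  Every groupoid completion of `B` is nonsingular, and any
two groupoid completions are related by an isomorphism of categories compatible with
the comparison functors. -/
theorem stmt_8 {B : Type u} [Category.{v} B] [Quiver.IsThin B] :
    (∃ c : GroupoidCompletionData B, c.IsCompletion ∧ c.carrier = B ∧
      (∀ x y : c.carrier, Subsingleton (x ⟶ y)) ∧
      (∀ x y : B, Nonempty (c.func.obj x ⟶ c.func.obj y) ↔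
        EqvGen (fun a b : B => Nonempty (a ⟶ b)) x y)) ∧
    (∀ c : GroupoidCompletionData B, c.IsCompletion →
      ∀ x y : c.carrier, Subsingleton (x ⟶ y)) ∧
    (∀ c₁ c₂ : GroupoidCompletionData B, c₁.IsCompletion → c₂.IsCompletion →
      ∃ (F : c₁.carrier ⥤ c₂.carrier) (F' : c₂.carrier ⥤ c₁.carrier),
        F ⋙ F' = 𝟭 c₁.carrier ∧ F' ⋙ F = 𝟭 c₂.carrier ∧ c₁.func ⋙ F = c₂.func) := by
  refine ⟨⟨⟨GC B, gcFunctor B⟩, gc_isCompletion B, rfl, gcSubsingleton B, fun x y => ?_⟩,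
      completion_thin, fun c₁ c₂ h₁ h₂ => ?_⟩
  · exact ⟨fun ⟨h⟩ => h.down.down, fun h => ⟨⟨⟨h⟩⟩⟩⟩
  · have t₁ := completion_thin c₁ h₁
    have t₂ := completion_thin c₂ h₂
    set e₁ := Equiv.ofBijective _ h₁.1 with he₁
    set e₂ := Equiv.ofBijective _ h₂.1 with he₂
    have key : ∀ (a b : c₁.carrier), (a ⟶ b) →
        Nonempty (c₂.func.obj (e₁.symm a) ⟶ c₂.func.obj (e₁.symm b)) := by
      intro a b f
      rw [← groupoid_eqv, ← h₂.2.2.1, h₁.2.2.1, groupoid_eqv]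
      have ha : c₁.func.obj (e₁.symm a) = a := e₁.apply_symm_apply a
      have hb : c₁.func.obj (e₁.symm b) = b := e₁.apply_symm_apply b
      exact ⟨eqToHom ha ≫ f ≫ eqToHom hb.symm⟩
    have key' : ∀ (a b : c₂.carrier), (a ⟶ b) →
        Nonempty (c₁.func.obj (e₂.symm a) ⟶ c₁.func.obj (e₂.symm b)) := by
      intro a b f
      rw [← groupoid_eqv, ← h₁.2.2.1, h₂.2.2.1, groupoid_eqv]
      have ha : c₂.func.obj (e₂.symm a) = a := e₂.apply_symm_apply a
      have hb : c₂.func.obj (e₂.symm b) = b := e₂.apply_symm_apply b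
      exact ⟨eqToHom ha ≫ f ≫ eqToHom hb.symm⟩
    refine ⟨{ obj := fun a => c₂.func.obj (e₁.symm a),
              map := fun f => (key _ _ f).some,
              map_id := fun a => Subsingleton.elim _ _,
              map_comp := fun f g => Subsingleton.elim _ _ },
            { obj := fun a => c₁.func.obj (e₂.symm a),
              map := fun f => (key' _ _ f).some,
              map_id := fun a => Subsingleton.elim _ _,
              map_comp := fun f g => Subsingleton.elim _ _ }, ?_, ?_, ?_⟩
    · refine CategoryTheory.Functor.ext (fun a => ?_) (fun a b f => Subsingleton.elim _ _)
      show c₁.func.obj (e₂.symm (c₂.func.obj (e₁.symm a))) = a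
      have : e₂.symm (c₂.func.obj (e₁.symm a)) = e₁.symm a := e₂.symm_apply_apply _
      rw [this]; exact e₁.apply_symm_apply a
    · refine CategoryTheory.Functor.ext (fun a => ?_) (fun a b f => Subsingleton.elim _ _)
      show c₂.func.obj (e₁.symm (c₁.func.obj (e₂.symm a))) = a
      have : e₁.symm (c₁.func.obj (e₂.symm a)) = e₂.symm a := e₁.symm_apply_apply _
      rw [this]; exact e₂.apply_symm_apply a
    · refine CategoryTheory.Functor.ext (fun x => ?_) (fun a b f => Subsingleton.elim _ _)
      show c₂.func.obj (e₁.symm (c₁.func.obj x)) = c₂.func.obj x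
      have : e₁.symm (c₁.func.obj x) = x := e₁.symm_apply_apply x
      rw [this]
end

section
/- Let B be a nonsingular (thin) category such that the relation x ⪯ y :⟺ Hom_B(x, y) ≠ ∅ is a partial order on the objects, and such that every ∼_B-equivalence class contains a (necessarily unique) minimum, i.e. an object r of the class with Hom_B(r, y) ≠ ∅ for every y in the class. Then for every groupoid Z and every functor f : B ⥤ Z, f extends to the groupoid completion of B: there is an assignment of a morphism F(x, y) : f(x) ⟶ f(y) in Z to every ordered pair of objects with x ∼_B y, such that (1) F(x, y) = f(m) whenever m : x ⟶ y is a morphism of B, (2) F(x, x) = 𝟙_{f(x)}, and (3) F(x, y) ≫ F(y, z) = F(x, z) whenever x ∼_B y ∼_B z; in particular each F(x, y) is an isomorphism with inverse F(y, x). -/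
open CategoryTheory Relation

universe w v u

/-- The relation on the objects of a category generated by "there exists a morphism". -/
def stmt9HomRel (B : Type u) [Category.{v} B] : B → B → Prop :=
  fun a b => Nonempty (a ⟶ b)

/-- Let `B` be a thin category such that `x ⪯ y ↔ Hom(x,y) ≠ ∅` is a
partial order (antisymmetry is the only nontrivial condition) and every
`∼_B`-equivalence class contains a minimum `r`, i.e. one with `Hom(r, y) ≠ ∅` for all
`y` in the class.  Then any functor `f : B ⥤ Z` to a groupoid extends to the groupoid
completion of `B`: there is an assignment `F x y : f.obj x ⟶ f.obj y` for all
`x ∼_B y` which restricts to `f` on morphisms of `B`, sends identities to identities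
and is compatible with composition; in particular each `F x y` is an isomorphism with
inverse `F y x`. -/
theorem stmt_9 {B : Type u} [Category.{v} B] [Quiver.IsThin B]
    (hanti : ∀ x y : B, Nonempty (x ⟶ y) → Nonempty (y ⟶ x) → x = y)
    (hmin : ∀ x : B, ∃ r : B, EqvGen (stmt9HomRel B) r x ∧
      ∀ y : B, EqvGen (stmt9HomRel B) r y → Nonempty (r ⟶ y))
    {Z : Type w} [Groupoid Z] (f : B ⥤ Z) :
    ∃ F : ∀ x y : B, EqvGen (stmt9HomRel B) x y → (f.obj x ⟶ f.obj y),
      (∀ (x y : B) (m : x ⟶ y) (h : EqvGen (stmt9HomRel B) x y),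
        F x y h = f.map m) ∧
      (∀ (x : B) (h : EqvGen (stmt9HomRel B) x x), F x x h = 𝟙 (f.obj x)) ∧
      (∀ (x y z : B) (hxy : EqvGen (stmt9HomRel B) x y)
        (hyz : EqvGen (stmt9HomRel B) y z),
        F x y hxy ≫ F y z hyz = F x z (EqvGen.trans x y z hxy hyz)) ∧
      (∀ (x y : B) (hxy : EqvGen (stmt9HomRel B) x y)
        (hyx : EqvGen (stmt9HomRel B) y x),
        F x y hxy ≫ F y x hyx = 𝟙 (f.obj x)) := by

  classical
  choose r hr hm using hmin
  have key : ∀ x y : B, EqvGen (stmt9HomRel B) x y → r x = r y := by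
    intro x y h
    exact hanti _ _
      (hm x (r y) ((hr x).trans _ _ _ (h.trans _ _ _ ((hr y).symm _ _))))
      (hm y (r x) ((hr y).trans _ _ _ ((h.symm _ _).trans _ _ _ ((hr x).symm _ _))))
  set F : ∀ x y : B, EqvGen (stmt9HomRel B) x y → (f.obj x ⟶ f.obj y) :=
    fun x y h =>
      inv (f.map (hm x x (hr x)).some) ≫ f.map (hm x y ((hr x).trans _ _ _ h)).some with hF
  have h1 : ∀ (x y : B) (m : x ⟶ y) (h : EqvGen (stmt9HomRel B) x y), F x y h = f.map m := by
    intro x y m h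
    have : (hm x y ((hr x).trans _ _ _ h)).some = (hm x x (hr x)).some ≫ m :=
      Subsingleton.elim _ _
    rw [hF]
    simp [this]
  have h2 : ∀ (x : B) (h : EqvGen (stmt9HomRel B) x x), F x x h = 𝟙 (f.obj x) := by
    intro x h
    rw [hF]
    simp only
    have : (hm x x ((hr x).trans _ _ _ h)).some = (hm x x (hr x)).some :=
      Subsingleton.elim _ _
    rw [this, IsIso.inv_hom_id]
  have h3 : ∀ (x y z : B) (hxy : EqvGen (stmt9HomRel B) x y)
      (hyz : EqvGen (stmt9HomRel B) y z),
      F x y hxy ≫ F y z hyz = F x z (EqvGen.trans x y z hxy hyz) := by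
    intro x y z hxy hyz
    have e : r x = r y := key x y hxy
    have e1 : (hm x y ((hr x).trans _ _ _ hxy)).some =
        eqToHom e ≫ (hm y y (hr y)).some := Subsingleton.elim _ _
    have e2 : (hm x z ((hr x).trans _ _ _ (EqvGen.trans x y z hxy hyz))).some =
        eqToHom e ≫ (hm y z ((hr y).trans _ _ _ hyz)).some := Subsingleton.elim _ _
    rw [hF]
    simp [e1, e2]
  have h4 : ∀ (x y : B) (hxy : EqvGen (stmt9HomRel B) x y)
      (hyx : EqvGen (stmt9HomRel B) y x),
      F x y hxy ≫ F y x hyx = 𝟙 (f.obj x) := by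
    intro x y hxy hyx
    rw [h3 x y x hxy hyx, h2 x (hxy.trans _ _ _ hyx)]
  exact ⟨F, h1, h2, h3, h4⟩
end

section
/- Let G be a group acting on a category B and form the category B^{×G}. Then for any two objects a, b one has a ∼_{B^{×G}} b if and only if there exists g ∈ G with (g•a) ∼_B b. Consequently, since the G-action descends to an action on the set |B| of ∼_B-classes by g•[x] := [g•x], the identity map on objects induces a bijection from the set of G-orbits |B|/G onto |B^{×G}|. -/
open CategoryTheory Relation

universe w v u

/-- The relation "there exists a morphism" on the objects of a category. -/
def stmt12BRel (B : Type u) [Category.{v} B] : B → B → Prop :=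
  fun x y => Nonempty (x ⟶ y)

/-- The relation "there exists a morphism in `B^{×G}`" on the objects: a morphism
`a → b` in `B^{×G}` is a pair `(g, m)` with `m : φ g a ⟶ b`. -/
def stmt12GRel {B : Type u} [Category.{v} B] {G : Type w} (φ : G → B → B) :
    B → B → Prop :=
  fun a b => ∃ g : G, Nonempty (φ g a ⟶ b)

/-!
A morphism `a → b` of `B^{×G}` is a morphism `g • a ⟶ b` of `B`, so one step of `∼_{B^{×G}}`
is a translate followed by one step of `∼_B`. Since `G` acts by functors, translation
preserves `∼_B`; hence the relation "`g • a ∼_B b` for some `g`" is reflexive, symmetric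
(translate back by `g⁻¹`) and transitive (compose the group elements), and it contains the
generating relation of `∼_{B^{×G}}`. Only the existence of morphisms matters, so the argument
works for any reflexive relation on a `G`-set that the action preserves. The bijection
`|B|/G ≃ |B^{×G}|` is then formal: both sides identify two objects exactly when some translate
of the first is `∼_B`-equivalent to the second.
-/

theorem Relation.EqvGen.map {α β : Type*} {r : α → α → Prop} {s : β → β → Prop} {f : α → β}
    (hf : ∀ a b, r a b → s (f a) (f b)) {a b : α} (h : EqvGen r a b) :
    EqvGen s (f a) (f b) :=
  Quot.eqvGen_exact (congrArg (Quot.map f hf) (Quot.eqvGen_sound h))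

def smulRel {α : Type*} (G : Type*) [SMul G α] (r : α → α → Prop) (a b : α) : Prop :=
  ∃ g : G, r (g • a) b

section

variable {G α : Type*} [Group G] [MulAction G α] {r : α → α → Prop}

theorem le_smulRel : r ≤ smulRel G r := fun a b h => ⟨1, by rwa [one_smul]⟩

variable [Std.Refl r] (hr : ∀ (g : G) a b, r a b → r (g • a) (g • b))
include hr

theorem eqvGen_smulRel_iff {a b : α} :
    EqvGen (smulRel G r) a b ↔ ∃ g : G, EqvGen r (g • a) b := by
  constructor
  · intro h
    induction h with
    | rel a b h =>
      obtain ⟨g, hg⟩ := h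
      exact ⟨g, .rel _ _ hg⟩
    | refl a => exact ⟨1, by rw [one_smul]; exact .refl a⟩
    | symm a b _ ih =>
      obtain ⟨g, hg⟩ := ih
      refine ⟨g⁻¹, .symm _ _ ?_⟩
      simpa using EqvGen.map (hr g⁻¹) hg
    | trans a b c _ _ ihab ihbc =>
      obtain ⟨g, hg⟩ := ihab
      obtain ⟨h, hh⟩ := ihbc
      refine ⟨h * g, ?_⟩
      rw [mul_smul]
      exact .trans _ _ _ (EqvGen.map (hr h) hg) hh
  · rintro ⟨g, hg⟩
    exact .trans _ (g • a) _ (.rel _ _ ⟨g, refl_of r _⟩) (EqvGen.mono le_smulRel _ _ hg)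

def quotOrbitsEquiv :
    Quot (fun p q : Quot r => ∃ g : G, Quot.map (g • ·) (hr g) p = q) ≃ Quot (smulRel G r) where
  toFun := Quot.lift (Quot.lift (Quot.mk _) fun a b h => Quot.sound (le_smulRel a b h)) <| by
    rintro p _ ⟨g, rfl⟩
    induction p using Quot.ind with
    | _ a => exact Quot.sound ⟨g, refl_of r _⟩
  invFun := Quot.lift (fun a => Quot.mk _ (Quot.mk _ a)) <| by
    rintro a b ⟨g, h⟩
    exact (Quot.sound ⟨g, rfl⟩).trans (congrArg _ (Quot.sound h))
  left_inv p := by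
    induction p using Quot.ind with
    | _ p => induction p using Quot.ind with
      | _ a => rfl
  right_inv p := by
    induction p using Quot.ind with
    | _ a => rfl

end

theorem stmt_12_general {B : Type u} [Category.{v} B] {G : Type w} [Group G]
    (φ : G → B → B) (ψ : ∀ (g : G) {x y : B}, (x ⟶ y) → (φ g x ⟶ φ g y))
    (hφone : ∀ x : B, φ 1 x = x)
    (hφmul : ∀ (g h : G) (x : B), φ (g * h) x = φ g (φ h x)) :
    (∀ a b : B,
      EqvGen (stmt12GRel φ) a b ↔ ∃ g : G, EqvGen (stmt12BRel B) (φ g a) b) ∧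
    (∃ act : G → Quot (stmt12BRel B) → Quot (stmt12BRel B),
      (∀ (g : G) (x : B), act g (Quot.mk (stmt12BRel B) x) = Quot.mk (stmt12BRel B) (φ g x)) ∧
      ∃ e : Quot (fun p q : Quot (stmt12BRel B) => ∃ g : G, act g p = q) ≃
          Quot (stmt12GRel φ),
        ∀ x : B,
          e (Quot.mk (fun p q : Quot (stmt12BRel B) => ∃ g : G, act g p = q)
              (Quot.mk (stmt12BRel B) x)) = Quot.mk (stmt12GRel φ) x) := by
  let _ : MulAction G B := { smul := φ, one_smul := hφone, mul_smul := hφmul }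
  have : Std.Refl (stmt12BRel B) := ⟨fun x => ⟨𝟙 x⟩⟩
  have hψ : ∀ (g : G) x y, stmt12BRel B x y → stmt12BRel B (g • x) (g • y) :=
    fun g _ _ ⟨m⟩ => ⟨ψ g m⟩
  exact ⟨fun a b => eqvGen_smulRel_iff hψ, _, fun _ _ => rfl, quotOrbitsEquiv hψ, fun _ => rfl⟩

/-- Let `G` act on a category `B` (action `φ` on objects, `ψ` on
morphisms).  Then for the category `B^{×G}` one has `a ∼_{B^{×G}} b` iff there is
`g ∈ G` with `(g • a) ∼_B b`.  Consequently the `G`-action descends to the set `|B|`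
of `∼_B`-classes, and the identity on objects induces a bijection
`|B|/G ≃ |B^{×G}|`. -/
theorem stmt_12 {B : Type u} [Category.{v} B] {G : Type w} [Group G]
    (φ : G → B → B) (ψ : ∀ (g : G) {x y : B}, (x ⟶ y) → (φ g x ⟶ φ g y))
    (hφone : ∀ x : B, φ 1 x = x)
    (hφmul : ∀ (g h : G) (x : B), φ (g * h) x = φ g (φ h x))
    (hψid : ∀ (g : G) (x : B), ψ g (𝟙 x) = 𝟙 (φ g x))
    (hψcomp : ∀ (g : G) {x y z : B} (m : x ⟶ y) (m' : y ⟶ z),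
      ψ g (m ≫ m') = ψ g m ≫ ψ g m')
    (hψone : ∀ {x y : B} (m : x ⟶ y),
      ψ 1 m = eqToHom (hφone x) ≫ m ≫ eqToHom (hφone y).symm)
    (hψmul : ∀ (g h : G) {x y : B} (m : x ⟶ y),
      ψ (g * h) m = eqToHom (hφmul g h x) ≫ ψ g (ψ h m) ≫ eqToHom (hφmul g h y).symm) :
    (∀ a b : B,
      EqvGen (stmt12GRel φ) a b ↔ ∃ g : G, EqvGen (stmt12BRel B) (φ g a) b) ∧
    (∃ act : G → Quot (stmt12BRel B) → Quot (stmt12BRel B),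
      (∀ (g : G) (x : B), act g (Quot.mk (stmt12BRel B) x) = Quot.mk (stmt12BRel B) (φ g x)) ∧
      ∃ e : Quot (fun p q : Quot (stmt12BRel B) => ∃ g : G, act g p = q) ≃
          Quot (stmt12GRel φ),
        ∀ x : B,
          e (Quot.mk (fun p q : Quot (stmt12BRel B) => ∃ g : G, act g p = q)
              (Quot.mk (stmt12BRel B) x)) = Quot.mk (stmt12GRel φ) x) :=
  stmt_12_general φ ψ hφone hφmul
end

section
/- Let C be a groupoid carrying an inner action α of a group G with source function σ, and equip C with the induced G-action: g•x := σ(g⁻¹, x) on objects and g•m := α(g⁻¹, x) ≫ m ≫ (α(g⁻¹, y))⁻¹ for a morphism m : x ⟶ y. Form the category C^{×G} from this action. Then the assignment that is the identity on objects and sends a morphism (g, m) : a → b of C^{×G} (so m : g•a ⟶ b in C) to the morphism α(g, g•a) ≫ m : a ⟶ b of C is a functor ι^{×G} : C^{×G} ⥤ C; here α(g, g•a) is a morphism a ⟶ g•a because σ(g, σ(g⁻¹, a)) = a. This functor sends each morphism of the form (1, m) to m. -/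
open CategoryTheory

universe w v u

/-- Morphisms from `a` to `b` in the category `C^{×G}` associated to an action of `G`
on `C` with action `φ` on objects: pairs `(g, m)` with `m : φ g a ⟶ b`. -/
def GProdHom {C : Type u} [Category.{v} C] {G : Type w} (φ : G → C → C) (a b : C) :=
  Σ g : G, (φ g a ⟶ b)

/-- The identity morphism `(1, 𝟙 a)` of `C^{×G}`. -/
def gprodId {C : Type u} [Category.{v} C] {G : Type w} [Group G]
    (φ : G → C → C) (hφone : ∀ x : C, φ 1 x = x) (a : C) : GProdHom φ a a :=
  ⟨1, eqToHom (hφone a)⟩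

/-- The composite in `C^{×G}` of `(g, m) : a → b` followed by `(h, m') : b → c`. -/
def gprodComp {C : Type u} [Category.{v} C] {G : Type w} [Group G]
    (φ : G → C → C) (ψ : ∀ (g : G) {x y : C}, (x ⟶ y) → (φ g x ⟶ φ g y))
    (hφmul : ∀ (g h : G) (x : C), φ (g * h) x = φ g (φ h x))
    {a b c : C} (f₁ : GProdHom φ a b) (f₂ : GProdHom φ b c) : GProdHom φ a c :=
  ⟨f₂.1 * f₁.1, eqToHom (hφmul f₂.1 f₁.1 a) ≫ ψ f₂.1 f₁.2 ≫ f₂.2⟩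

/-- The action on objects `g • x := σ g⁻¹ x` induced by an inner action with source
function `σ`. -/
def innerφ {C : Type u} {G : Type w} [Group G] (σ : G → C → C) : G → C → C :=
  fun g x => σ g⁻¹ x

/-- The action on morphisms `g • m := α g⁻¹ x ≫ m ≫ (α g⁻¹ y)⁻¹` induced by an inner
action `(σ, α)`. -/
def innerConj {C : Type u} [Groupoid C] {G : Type w} [Group G]
    (σ : G → C → C) (α : ∀ (g : G) (x : C), σ g x ⟶ x)
    (g : G) {x y : C} (m : x ⟶ y) : innerφ σ g x ⟶ innerφ σ g y :=
  α g⁻¹ x ≫ m ≫ Groupoid.inv (α g⁻¹ y)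

theorem innerφ_one {C : Type u} {G : Type w} [Group G] (σ : G → C → C)
    (hσ_one : ∀ x : C, σ 1 x = x) (x : C) : innerφ σ (1 : G) x = x := by
  show σ (1 : G)⁻¹ x = x
  rw [inv_one, hσ_one]

theorem innerφ_mul {C : Type u} {G : Type w} [Group G] (σ : G → C → C)
    (hσ_mul : ∀ (g h : G) (x : C), σ (h * g) x = σ g (σ h x)) (g h : G) (x : C) :
    innerφ σ (g * h) x = innerφ σ g (innerφ σ h x) := by
  show σ (g * h)⁻¹ x = σ g⁻¹ (σ h⁻¹ x)
  rw [mul_inv_rev]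
  exact hσ_mul g⁻¹ h⁻¹ x

/-- The map sending a morphism `(g, m) : a → b` of `C^{×G}` (so `m : g • a ⟶ b`) to
the morphism `α g (g • a) ≫ m : a ⟶ b` of `C`; here `α g (g • a)` is a morphism
`a ⟶ g • a` because `σ g (σ g⁻¹ a) = a`. -/
def iotaG {C : Type u} [Groupoid C] {G : Type w} [Group G]
    (σ : G → C → C) (α : ∀ (g : G) (x : C), σ g x ⟶ x)
    (hσ_one : ∀ x : C, σ 1 x = x)
    (hσ_mul : ∀ (g h : G) (x : C), σ (h * g) x = σ g (σ h x))
    {a b : C} (f : GProdHom (innerφ σ) a b) : a ⟶ b :=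
  eqToHom (show a = σ f.1 (σ f.1⁻¹ a) by
    rw [← hσ_mul f.1 f.1⁻¹ a, inv_mul_cancel, hσ_one]) ≫ α f.1 (σ f.1⁻¹ a) ≫ f.2

/-!
Since `α g (g • a) ≫ α g⁻¹ a = α (g⁻¹ * g) a = 𝟙`, `iotaG` sends `(g, m)` to
`(α g⁻¹ a)⁻¹ ≫ m`. In this form the image of the composite `(h * g, (h • m) ≫ m')` is
`(α (h * g)⁻¹ a)⁻¹ ≫ α h⁻¹ (g • a) ≫ m ≫ (α h⁻¹ b)⁻¹ ≫ m'`, and the cocycle identity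
`α (g⁻¹ * h⁻¹) a = α h⁻¹ (g • a) ≫ α g⁻¹ a` collapses its first two factors to `(α g⁻¹ a)⁻¹`.
-/

namespace InnerAction

variable {C : Type u} [Groupoid C] {G : Type w}
  (σ : G → C → C) (α : ∀ (g : G) (x : C), σ g x ⟶ x)

theorem α_congr_left {g g' : G} (hg : g = g') (x : C) :
    α g x = eqToHom (by rw [hg]) ≫ α g' x := by
  subst hg
  simp

variable [Group G]

theorem α_eq_eqToHom_of_eq_one (hσ_one : ∀ x : C, σ 1 x = x)
    (hα_one : ∀ x : C, α 1 x = eqToHom (hσ_one x)) {g : G} (hg : g = 1) (x : C) :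
    α g x = eqToHom (by rw [hg, hσ_one]) := by
  rw [α_congr_left σ α hg, hα_one, eqToHom_trans]

theorem inv_α_inv (hσ_one : ∀ x : C, σ 1 x = x)
    (hα_one : ∀ x : C, α 1 x = eqToHom (hσ_one x))
    (hσ_mul : ∀ (g h : G) (x : C), σ (h * g) x = σ g (σ h x))
    (hα_mul : ∀ (g h : G) (x : C),
      α (h * g) x = eqToHom (hσ_mul g h x) ≫ α g (σ h x) ≫ α h x) (g : G) (x : C) :
    inv (α g⁻¹ x) = eqToHom (by rw [← hσ_mul, inv_mul_cancel, hσ_one]) ≫ α g (σ g⁻¹ x) := by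
  symm
  apply IsIso.eq_inv_of_inv_hom_id
  have hcocycle := hα_mul g g⁻¹ x
  rw [α_eq_eqToHom_of_eq_one σ α hσ_one hα_one (inv_mul_cancel g)] at hcocycle
  have hσ_inv_mul : x = σ (g⁻¹ * g) x := by rw [inv_mul_cancel, hσ_one]
  rw [← eqToHom_trans hσ_inv_mul (hσ_mul g g⁻¹ x)]
  simp only [Category.assoc]
  rw [← hcocycle, eqToHom_trans, eqToHom_refl]

theorem α_inv_mul (hσ_mul : ∀ (g h : G) (x : C), σ (h * g) x = σ g (σ h x))
    (hα_mul : ∀ (g h : G) (x : C),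
      α (h * g) x = eqToHom (hσ_mul g h x) ≫ α g (σ h x) ≫ α h x) (g h : G) (x : C) :
    α (h * g)⁻¹ x = eqToHom (by rw [mul_inv_rev, hσ_mul]) ≫ α h⁻¹ (σ g⁻¹ x) ≫ α g⁻¹ x := by
  rw [α_congr_left σ α (mul_inv_rev h g), hα_mul, eqToHom_trans_assoc]

theorem inv_α_mul_inv_comp (hσ_mul : ∀ (g h : G) (x : C), σ (h * g) x = σ g (σ h x))
    (hα_mul : ∀ (g h : G) (x : C),
      α (h * g) x = eqToHom (hσ_mul g h x) ≫ α g (σ h x) ≫ α h x) (g h : G) (x : C) :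
    inv (α (h * g)⁻¹ x) ≫ eqToHom (by rw [mul_inv_rev, hσ_mul]) ≫ α h⁻¹ (σ g⁻¹ x) =
      inv (α g⁻¹ x) := by
  rw [α_inv_mul σ α hσ_mul hα_mul, IsIso.inv_comp, IsIso.inv_comp, inv_eqToHom]
  simp

theorem iotaG_eq_inv_comp (hσ_one : ∀ x : C, σ 1 x = x)
    (hα_one : ∀ x : C, α 1 x = eqToHom (hσ_one x))
    (hσ_mul : ∀ (g h : G) (x : C), σ (h * g) x = σ g (σ h x))
    (hα_mul : ∀ (g h : G) (x : C),
      α (h * g) x = eqToHom (hσ_mul g h x) ≫ α g (σ h x) ≫ α h x)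
    (g : G) {a b : C} (m : innerφ σ g a ⟶ b) :
    iotaG σ α hσ_one hσ_mul ⟨g, m⟩ = inv (α g⁻¹ a) ≫ m := by
  rw [inv_α_inv σ α hσ_one hα_one hσ_mul hα_mul]
  exact (Category.assoc _ _ _).symm

end InnerAction

/-- Let `C` be a groupoid with an inner action `(σ, α)` of a group
`G`, equipped with the induced `G`-action (`innerφ` on objects, `innerConj` on
morphisms), and form `C^{×G}`.  Then the assignment which is the identity on objects
and sends `(g, m) : a → b` to `α g (g • a) ≫ m : a ⟶ b` is a functor
`ι^{×G} : C^{×G} ⥤ C` (it preserves identities and composition), and it sends each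
morphism of the form `(1, m)` to `m`. -/
theorem stmt_14 {C : Type u} [Groupoid C] {G : Type w} [Group G]
    (σ : G → C → C) (α : ∀ (g : G) (x : C), σ g x ⟶ x)
    (hσ_one : ∀ x : C, σ 1 x = x)
    (hα_one : ∀ x : C, α 1 x = eqToHom (hσ_one x))
    (hσ_mul : ∀ (g h : G) (x : C), σ (h * g) x = σ g (σ h x))
    (hα_mul : ∀ (g h : G) (x : C),
      α (h * g) x = eqToHom (hσ_mul g h x) ≫ α g (σ h x) ≫ α h x) :
    (∀ a : C,
      iotaG σ α hσ_one hσ_mul (gprodId (innerφ σ) (innerφ_one σ hσ_one) a) = 𝟙 a) ∧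
    (∀ (a b c : C) (f₁ : GProdHom (innerφ σ) a b) (f₂ : GProdHom (innerφ σ) b c),
      iotaG σ α hσ_one hσ_mul
          (gprodComp (innerφ σ) (innerConj σ α) (innerφ_mul σ hσ_mul) f₁ f₂) =
        iotaG σ α hσ_one hσ_mul f₁ ≫ iotaG σ α hσ_one hσ_mul f₂) ∧
    (∀ (a b : C) (m : innerφ σ (1 : G) a ⟶ b),
      iotaG σ α hσ_one hσ_mul ⟨(1 : G), m⟩ =
        eqToHom (innerφ_one σ hσ_one a).symm ≫ m) := by
  have hι := InnerAction.iotaG_eq_inv_comp σ α hσ_one hα_one hσ_mul hα_mul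
  have hα_one_inv : ∀ a : C, inv (α (1 : G)⁻¹ a) = eqToHom (by rw [inv_one, hσ_one]) :=
    fun a => by rw [InnerAction.α_eq_eqToHom_of_eq_one σ α hσ_one hα_one inv_one, inv_eqToHom]
  refine ⟨fun a => ?_, ?_, fun a b m => ?_⟩
  · refine (hι 1 _).trans ?_
    rw [hα_one_inv]
    exact (eqToHom_trans _ _).trans (eqToHom_refl _ _)
  · rintro a b c ⟨g, m⟩ ⟨h, m'⟩
    refine (hι (h * g) _).trans ?_
    rw [hι, hι]
    dsimp only [gprodComp, innerConj, innerφ] at m m' ⊢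
    simp only [Groupoid.inv_eq_inv, Category.assoc]
    rw [reassoc_of% (InnerAction.inv_α_mul_inv_comp σ α hσ_mul hα_mul g h a)]
  · rw [hι, hα_one_inv]
    rfl
end

section
/- Given set-theoretic reduction data over a finite index set A, consider the set Q of pairs (I, x) with ∅ ≠ I ⊆ A and x ∈ V_I, the relation (I, x) ⪯ (J, y) :⟺ I ⊆ J, y ∈ Ṽ_{IJ} and ρ_{IJ}(y) = x, and the equivalence relation ∼ on Q generated by ⪯. Then: (1) ⪯ is a partial order on Q; (2) for every (J, y) ∈ Q the family {H : ∅ ≠ H ⊆ J, y ∈ Ṽ_{HJ}} is nonempty and totally ordered by inclusion, hence has a least element H_y, and y ∈ Ṽ_{H_y J}; (3) the element (H_y, ρ_{H_y J}(y)) satisfies (H_y, ρ_{H_y J}(y)) ⪯ (I, x) for every (I, x) with (I, x) ∼ (J, y), and it is the unique ⪯-least element of the ∼-equivalence class of (J, y). -/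
open Relation

/-- An element of the object set `Q` associated to set-theoretic reduction data: a pair
`(I, x)` with `I ⊆ A` a nonempty finite subset and `x ∈ V_I`. -/
structure QOf {A : Type*} (V : Finset A → Type*) where
  /-- the index set -/
  idx : Finset A
  /-- the index set is nonempty -/
  nonempty_idx : idx.Nonempty
  /-- the point of `V idx` -/
  pt : V idx

/-- The relation `(I, x) ⪯ (J, y) ↔ I ⊆ J ∧ y ∈ Ṽ_{IJ} ∧ ρ_{IJ}(y) = x` on `Q`. -/
def Qle {A : Type*} {V : Finset A → Type*} (Vt : ∀ I J : Finset A, Set (V J))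
    (ρ : ∀ (I J : Finset A) (y : V J), y ∈ Vt I J → V I) :
    QOf V → QOf V → Prop :=
  fun p q => ∃ _ : p.idx ⊆ q.idx,
    ∃ hy : q.pt ∈ Vt p.idx q.idx, ρ p.idx q.idx q.pt hy = p.pt

/-- Given set-theoretic reduction data over a finite index set `A`
(sets `V_I`, subsets `Ṽ_{IJ} ⊆ V_J` and maps `ρ_{IJ} : Ṽ_{IJ} → V_I` for nonempty
`I ⊆ J ⊆ A`, satisfying the identity, separation and composition conditions), consider
the set `Q` of pairs `(I, x)` and the relation `⪯` generated as above, with `∼` its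
equivalence closure.  Then: (1) `⪯` is a partial order on `Q`; (2) for every `(J, y)`
the family of nonempty `H ⊆ J` with `y ∈ Ṽ_{HJ}` is nonempty, totally ordered by
inclusion, and hence has a least element `H_y`; (3) the element
`(H_y, ρ_{H_y J}(y))` is `⪯` every element of the `∼`-class of `(J, y)`, and is the
unique such minimum of the class. -/
theorem stmt_15 {A : Type*} [Finite A] {V : Finset A → Type*}
    (Vt : ∀ I J : Finset A, Set (V J))
    (ρ : ∀ (I J : Finset A) (y : V J), y ∈ Vt I J → V I)
    (hid_set : ∀ I : Finset A, I.Nonempty → Vt I I = Set.univ)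
    (hid_map : ∀ I : Finset A, I.Nonempty → ∀ (y : V I) (hy : y ∈ Vt I I),
      ρ I I y hy = y)
    (hsep₁ : ∀ H I J : Finset A, H.Nonempty → I.Nonempty → J.Nonempty →
      H ⊆ I → H ⊆ J → ¬(I ⊆ J ∨ J ⊆ I) →
      ∀ x : V H, ¬((∃ (y : V I) (hy : y ∈ Vt H I), ρ H I y hy = x) ∧
        (∃ (z : V J) (hz : z ∈ Vt H J), ρ H J z hz = x)))
    (hsep₂ : ∀ H I J : Finset A, H.Nonempty → I.Nonempty → J.Nonempty →
      H ⊆ J → I ⊆ J → ¬(I ⊆ H ∨ H ⊆ I) → Vt I J ∩ Vt H J = ∅)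
    (hcomp_mem : ∀ H I J : Finset A, H.Nonempty → I.Nonempty → J.Nonempty →
      H ⊆ I → I ⊆ J → ∀ (y : V J) (hyI : y ∈ Vt I J),
        (y ∈ Vt H J ↔ ρ I J y hyI ∈ Vt H I))
    (hcomp_eq : ∀ H I J : Finset A, H.Nonempty → I.Nonempty → J.Nonempty →
      H ⊆ I → I ⊆ J → ∀ (y : V J) (hyI : y ∈ Vt I J) (hyH : y ∈ Vt H J)
        (h' : ρ I J y hyI ∈ Vt H I), ρ H J y hyH = ρ H I (ρ I J y hyI) h') :
    IsPartialOrder (QOf V) (Qle Vt ρ) ∧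
    (∀ (J : Finset A), J.Nonempty → ∀ y : V J,
      (∀ H H' : Finset A,
        H.Nonempty ∧ H ⊆ J ∧ y ∈ Vt H J → H'.Nonempty ∧ H' ⊆ J ∧ y ∈ Vt H' J →
        H ⊆ H' ∨ H' ⊆ H) ∧
      ∃ H₀ : Finset A, (H₀.Nonempty ∧ H₀ ⊆ J ∧ y ∈ Vt H₀ J) ∧
        ∀ H : Finset A, H.Nonempty ∧ H ⊆ J ∧ y ∈ Vt H J → H₀ ⊆ H) ∧
    (∀ (J : Finset A) (hJ : J.Nonempty) (y : V J)
      (H₀ : Finset A) (hH₀ : H₀.Nonempty) (_ : H₀ ⊆ J) (hy : y ∈ Vt H₀ J)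
      (_ : ∀ H : Finset A, H.Nonempty → H ⊆ J → y ∈ Vt H J → H₀ ⊆ H),
      (∀ p : QOf V, EqvGen (Qle Vt ρ) p ⟨J, hJ, y⟩ →
        Qle Vt ρ ⟨H₀, hH₀, ρ H₀ J y hy⟩ p) ∧
      (∀ m : QOf V, EqvGen (Qle Vt ρ) m ⟨J, hJ, y⟩ →
        (∀ p : QOf V, EqvGen (Qle Vt ρ) p ⟨J, hJ, y⟩ → Qle Vt ρ m p) →
        m = ⟨H₀, hH₀, ρ H₀ J y hy⟩)) := by

  classical
  have := Fintype.ofFinite A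
  -- reflexivity
  have hrefl : ∀ p : QOf V, Qle Vt ρ p p := by
    intro p
    have hmem : p.pt ∈ Vt p.idx p.idx := by
      rw [hid_set p.idx p.nonempty_idx]; trivial
    exact ⟨subset_rfl, hmem, hid_map p.idx p.nonempty_idx p.pt hmem⟩
  -- transitivity
  have htrans : ∀ p q r : QOf V, Qle Vt ρ p q → Qle Vt ρ q r → Qle Vt ρ p r := by
    rintro p q r ⟨hpq, hyq, heq⟩ ⟨hqr, hyr, her⟩
    have h' : ρ q.idx r.idx r.pt hyr ∈ Vt p.idx q.idx := by rw [her]; exact hyq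
    have hmem : r.pt ∈ Vt p.idx r.idx :=
      (hcomp_mem p.idx q.idx r.idx p.nonempty_idx q.nonempty_idx r.nonempty_idx
        hpq hqr r.pt hyr).2 h'
    refine ⟨hpq.trans hqr, hmem, ?_⟩
    rw [hcomp_eq p.idx q.idx r.idx p.nonempty_idx q.nonempty_idx r.nonempty_idx
      hpq hqr r.pt hyr hmem h']
    revert h'
    rw [her]
    intro h'
    exact heq
  -- antisymmetry
  have hanti : ∀ p q : QOf V, Qle Vt ρ p q → Qle Vt ρ q p → p = q := by
    rintro ⟨I, hI, x⟩ ⟨J, hJ, y⟩ ⟨hpq, hyq, heq⟩ ⟨hqp, hyp, hep⟩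
    simp only at *
    have hIJ : I = J := subset_antisymm hpq hqp
    subst hIJ
    have : x = y := by rw [← heq, hid_map I hI y hyq]
    subst this
    rfl
  -- heterogeneous congruence for ρ
  have ρcong : ∀ (I I' J : Finset A) (_ : I = I') (y : V J) (hy : y ∈ Vt I J)
      (hy' : y ∈ Vt I' J), HEq (ρ I J y hy) (ρ I' J y hy') := by
    intro I I' J h; subst h; intro y hy hy'; rfl
  have mkcong : ∀ (I I' : Finset A) (hI : I = I') (n : I.Nonempty) (n' : I'.Nonempty)
      (x : V I) (x' : V I'), HEq x x' → (⟨I, n, x⟩ : QOf V) = ⟨I', n', x'⟩ := by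
    intro I I' hI; subst hI; intro n n' x x' h; cases h; rfl
  -- totality of the family, in general form
  have htot : ∀ q : QOf V, ∀ H H' : Finset A,
      H.Nonempty ∧ H ⊆ q.idx ∧ q.pt ∈ Vt H q.idx →
      H'.Nonempty ∧ H' ⊆ q.idx ∧ q.pt ∈ Vt H' q.idx → H ⊆ H' ∨ H' ⊆ H := by
    rintro q H H' ⟨hHn, hHs, hHm⟩ ⟨hH'n, hH's, hH'm⟩
    by_contra hc
    push_neg at hc
    have := hsep₂ H' H q.idx hH'n hHn q.nonempty_idx hH's hHs
      (by rintro (h | h) <;> [exact hc.1 h; exact hc.2 h])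
    exact absurd this (by
      rw [Set.eq_empty_iff_forall_notMem]
      push_neg
      exact ⟨q.pt, hHm, hH'm⟩)
  -- existence of a least element of the family
  have hexist : ∀ q : QOf V, ∃ H₀ : Finset A,
      (H₀.Nonempty ∧ H₀ ⊆ q.idx ∧ q.pt ∈ Vt H₀ q.idx) ∧
      ∀ H : Finset A, H.Nonempty ∧ H ⊆ q.idx ∧ q.pt ∈ Vt H q.idx → H₀ ⊆ H := by
    intro q
    set S : Set (Finset A) := {H | H.Nonempty ∧ H ⊆ q.idx ∧ q.pt ∈ Vt H q.idx} with hS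
    have hSfin : S.Finite := Set.toFinite S
    have hSne : S.Nonempty := ⟨q.idx, q.nonempty_idx, subset_rfl, by
      rw [hid_set q.idx q.nonempty_idx]; trivial⟩
    obtain ⟨H₀, hH₀S, hmin⟩ := Set.exists_min_image S Finset.card hSfin hSne
    refine ⟨H₀, hH₀S, fun H hH => ?_⟩
    rcases htot q H₀ H hH₀S hH with h | h
    · exact h
    · rw [← Finset.eq_of_subset_of_card_le h (hmin H hH)]
  choose Hm hHm hHmLeast using hexist
  -- the canonical minimum of each element
  let mq : QOf V → QOf V := fun q => ⟨Hm q, (hHm q).1, ρ (Hm q) q.idx q.pt (hHm q).2.2⟩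
  have hmq_le : ∀ q : QOf V, Qle Vt ρ (mq q) q :=
    fun q => ⟨(hHm q).2.1, (hHm q).2.2, rfl⟩
  -- mq is invariant along Qle
  have hstep : ∀ p q : QOf V, Qle Vt ρ p q → mq p = mq q := by
    rintro p q ⟨hsub, hmem, heq⟩
    have h1 : Hm q ⊆ p.idx := hHmLeast q p.idx ⟨p.nonempty_idx, hsub, hmem⟩
    have h2 : ρ p.idx q.idx q.pt hmem ∈ Vt (Hm q) p.idx :=
      (hcomp_mem (Hm q) p.idx q.idx (hHm q).1 p.nonempty_idx q.nonempty_idx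
        h1 hsub q.pt hmem).1 (hHm q).2.2
    have h2' : p.pt ∈ Vt (Hm q) p.idx := by rw [← heq]; exact h2
    have h3 : Hm p ⊆ Hm q := hHmLeast p (Hm q) ⟨(hHm q).1, h1, h2'⟩
    have h4 : q.pt ∈ Vt (Hm p) q.idx :=
      (hcomp_mem (Hm p) p.idx q.idx (hHm p).1 p.nonempty_idx q.nonempty_idx
        (hHm p).2.1 hsub q.pt hmem).2 (by rw [heq]; exact (hHm p).2.2)
    have h5 : Hm q ⊆ Hm p := hHmLeast q (Hm p) ⟨(hHm p).1, (hHm p).2.1.trans hsub, h4⟩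
    have hidx : Hm p = Hm q := subset_antisymm h3 h5
    have hpt : ρ (Hm q) q.idx q.pt (hHm q).2.2 = ρ (Hm q) p.idx p.pt h2' := by
      rw [hcomp_eq (Hm q) p.idx q.idx (hHm q).1 p.nonempty_idx q.nonempty_idx
        h1 hsub q.pt hmem (hHm q).2.2 h2]
      revert h2
      rw [heq]
      intro h2
      rfl
    show (⟨Hm p, (hHm p).1, ρ (Hm p) p.idx p.pt (hHm p).2.2⟩ : QOf V) =
      ⟨Hm q, (hHm q).1, ρ (Hm q) q.idx q.pt (hHm q).2.2⟩
    refine mkcong _ _ hidx _ _ _ _ ?_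
    rw [hpt]
    exact ρcong _ _ _ hidx _ _ _
  -- mq is constant on equivalence classes
  have hclass : ∀ p q : QOf V, EqvGen (Qle Vt ρ) p q → mq p = mq q := by
    intro p q h
    induction h with
    | rel _ _ h => exact hstep _ _ h
    | refl => rfl
    | symm _ _ _ ih => exact ih.symm
    | trans _ _ _ _ _ ih1 ih2 => exact ih1.trans ih2
  refine ⟨{ refl := hrefl, trans := htrans, antisymm := hanti }, ?_, ?_⟩
  · intro J hJ y
    exact ⟨htot ⟨J, hJ, y⟩, Hm ⟨J, hJ, y⟩, hHm ⟨J, hJ, y⟩, hHmLeast ⟨J, hJ, y⟩⟩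
  · intro J hJ y H₀ hH₀ hH₀J hy hleast
    set q₀ : QOf V := (⟨J, hJ, y⟩ : QOf V) with hq₀
    have hm₀ : (⟨H₀, hH₀, ρ H₀ J y hy⟩ : QOf V) = mq q₀ := by
      have hi1 : H₀ ⊆ Hm q₀ := hleast (Hm q₀) (hHm q₀).1 (hHm q₀).2.1 (hHm q₀).2.2
      have hi2 : Hm q₀ ⊆ H₀ := hHmLeast q₀ H₀ ⟨hH₀, hH₀J, hy⟩
      have hidx : H₀ = Hm q₀ := subset_antisymm hi1 hi2
      exact mkcong _ _ hidx _ _ _ _ (ρcong _ _ _ hidx _ _ _)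
    have hle : ∀ p : QOf V, EqvGen (Qle Vt ρ) p q₀ →
        Qle Vt ρ (⟨H₀, hH₀, ρ H₀ J y hy⟩ : QOf V) p := by
      intro p hp
      rw [hm₀, ← hclass p q₀ hp]
      exact hmq_le p
    refine ⟨hle, ?_⟩
    intro m hm hmleast
    have h1 : Qle Vt ρ (⟨H₀, hH₀, ρ H₀ J y hy⟩ : QOf V) m := hle m hm
    have h2 : Qle Vt ρ m (⟨H₀, hH₀, ρ H₀ J y hy⟩ : QOf V) := by
      apply hmleast
      exact EqvGen.rel _ _ ⟨hH₀J, hy, rfl⟩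
    exact hanti _ _ h2 h1
end

section
/- Given set-theoretic reduction data over a finite index set A, with Q, ⪯ and ∼ as below, for each (I, x) ∈ Q let H_x denote the least element of the family {H : ∅ ≠ H ⊆ I, x ∈ Ṽ_{HI}} (this family is nonempty and totally ordered by inclusion, so H_x exists and x ∈ Ṽ_{H_x I}). Then for all (I, x), (J, y) ∈ Q one has (I, x) ∼ (J, y) if and only if H_x = H_y and ρ_{H_x I}(x) = ρ_{H_y J}(y). -/
open Relation

/-- Given set-theoretic reduction data over a finite index set `A`,
for `(I, x) ∈ Q` let `H_x` be the least element of the (nonempty, totally ordered)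
family of nonempty `H ⊆ I` with `x ∈ Ṽ_{HI}`.  Then `(I, x) ∼ (J, y)` if and only if
`H_x = H_y` and `ρ_{H_x I}(x) = ρ_{H_y J}(y)`. -/
theorem stmt_16 {A : Type*} [Finite A] {V : Finset A → Type*}
    (Vt : ∀ I J : Finset A, Set (V J))
    (ρ : ∀ (I J : Finset A) (y : V J), y ∈ Vt I J → V I)
    (hid_set : ∀ I : Finset A, I.Nonempty → Vt I I = Set.univ)
    (hid_map : ∀ I : Finset A, I.Nonempty → ∀ (y : V I) (hy : y ∈ Vt I I),
      ρ I I y hy = y)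
    (hsep₁ : ∀ H I J : Finset A, H.Nonempty → I.Nonempty → J.Nonempty →
      H ⊆ I → H ⊆ J → ¬(I ⊆ J ∨ J ⊆ I) →
      ∀ x : V H, ¬((∃ (y : V I) (hy : y ∈ Vt H I), ρ H I y hy = x) ∧
        (∃ (z : V J) (hz : z ∈ Vt H J), ρ H J z hz = x)))
    (hsep₂ : ∀ H I J : Finset A, H.Nonempty → I.Nonempty → J.Nonempty →
      H ⊆ J → I ⊆ J → ¬(I ⊆ H ∨ H ⊆ I) → Vt I J ∩ Vt H J = ∅)
    (hcomp_mem : ∀ H I J : Finset A, H.Nonempty → I.Nonempty → J.Nonempty →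
      H ⊆ I → I ⊆ J → ∀ (y : V J) (hyI : y ∈ Vt I J),
        (y ∈ Vt H J ↔ ρ I J y hyI ∈ Vt H I))
    (hcomp_eq : ∀ H I J : Finset A, H.Nonempty → I.Nonempty → J.Nonempty →
      H ⊆ I → I ⊆ J → ∀ (y : V J) (hyI : y ∈ Vt I J) (hyH : y ∈ Vt H J)
        (h' : ρ I J y hyI ∈ Vt H I), ρ H J y hyH = ρ H I (ρ I J y hyI) h') :
    ∀ (I : Finset A) (hI : I.Nonempty) (x : V I)
      (J : Finset A) (hJ : J.Nonempty) (y : V J)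
      (H₁ : Finset A) (hH₁ : H₁.Nonempty) (_ : H₁ ⊆ I) (hx : x ∈ Vt H₁ I)
      (_ : ∀ H : Finset A, H.Nonempty → H ⊆ I → x ∈ Vt H I → H₁ ⊆ H)
      (H₂ : Finset A) (hH₂ : H₂.Nonempty) (_ : H₂ ⊆ J) (hy : y ∈ Vt H₂ J)
      (_ : ∀ H : Finset A, H.Nonempty → H ⊆ J → y ∈ Vt H J → H₂ ⊆ H),
      EqvGen (Qle Vt ρ) ⟨I, hI, x⟩ ⟨J, hJ, y⟩ ↔
        (H₁ = H₂ ∧ HEq (ρ H₁ I x hx) (ρ H₂ J y hy)) := by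
  classical
  have : Fintype A := Fintype.ofFinite A
  intro I hI x J hJ y H₁ hH₁ hH₁I hx hleast₁ H₂ hH₂ hH₂J hy hleast₂
  have cast_heq : ∀ {K : Finset A} {H H' : Finset A} (_ : H = H') {z : V K}
      (h : z ∈ Vt H K) (h' : z ∈ Vt H' K), HEq (ρ H K z h) (ρ H' K z h') := by
    rintro K H H' rfl z h h'
    rfl
  -- existence of least element for every node
  have hex : ∀ p : QOf V, ∃ H : Finset A, H.Nonempty ∧ H ⊆ p.idx ∧
      p.pt ∈ Vt H p.idx ∧ ∀ H' : Finset A, H'.Nonempty → H' ⊆ p.idx →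
        p.pt ∈ Vt H' p.idx → H ⊆ H' := by
    intro p
    obtain ⟨K, hK, x⟩ := p
    dsimp only
    set S : Set (Finset A) := {H | H.Nonempty ∧ H ⊆ K ∧ x ∈ Vt H K} with hS
    have hSne : K ∈ S := ⟨hK, subset_rfl, by rw [hid_set K hK]; trivial⟩
    have hfin : S.Finite := Set.toFinite S
    obtain ⟨H₀, hH₀m, hmin⟩ := hfin.toFinset.exists_min_image Finset.card
      ⟨K, hfin.mem_toFinset.mpr hSne⟩
    have hH₀S : H₀ ∈ S := hfin.mem_toFinset.mp hH₀m
    refine ⟨H₀, hH₀S.1, hH₀S.2.1, hH₀S.2.2, ?_⟩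
    intro H' hne' hsub' hmem'
    have hcmp : H₀ ⊆ H' ∨ H' ⊆ H₀ := by
      by_contra hc
      push_neg at hc
      have hdis := hsep₂ H' H₀ K hne' hH₀S.1 hK hsub' hH₀S.2.1 (by tauto)
      exact absurd hdis (by
        rw [Set.eq_empty_iff_forall_notMem]
        push_neg
        exact ⟨x, hH₀S.2.2, hmem'⟩)
    rcases hcmp with h | h
    · exact h
    · have hcard := hmin H' (hfin.mem_toFinset.mpr ⟨hne', hsub', hmem'⟩)
      rw [Finset.eq_of_subset_of_card_le h hcard]
  choose Hf hfne hfsub hfmem hfleast using hex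
  -- invariance of the reduced pair under ⪯
  have hkey : ∀ p q : QOf V, Qle Vt ρ p q →
      (⟨Hf p, ρ (Hf p) p.idx p.pt (hfmem p)⟩ : Sigma V)
        = ⟨Hf q, ρ (Hf q) q.idx q.pt (hfmem q)⟩ := by
    intro p q ⟨hIJ, hyp, hρ⟩
    have hmem1 : q.pt ∈ Vt (Hf p) q.idx := by
      rw [hcomp_mem (Hf p) p.idx q.idx (hfne p) p.nonempty_idx q.nonempty_idx
        (hfsub p) hIJ q.pt hyp, hρ]
      exact hfmem p
    have h21 : Hf q ⊆ Hf p :=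
      hfleast q (Hf p) (hfne p) ((hfsub p).trans hIJ) hmem1
    have hmem2 : ρ p.idx q.idx q.pt hyp ∈ Vt (Hf q) p.idx := by
      rw [← hcomp_mem (Hf q) p.idx q.idx (hfne q) p.nonempty_idx q.nonempty_idx
        (h21.trans (hfsub p)) hIJ q.pt hyp]
      exact hfmem q
    have hmem2' : p.pt ∈ Vt (Hf q) p.idx := by rwa [hρ] at hmem2
    have h12 : Hf p ⊆ Hf q :=
      hfleast p (Hf q) (hfne q) (h21.trans (hfsub p)) hmem2'
    have hHeq : Hf p = Hf q := subset_antisymm h12 h21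
    have hveq : ρ (Hf q) q.idx q.pt (hfmem q)
        = ρ (Hf q) p.idx (ρ p.idx q.idx q.pt hyp) hmem2 :=
      hcomp_eq (Hf q) p.idx q.idx (hfne q) p.nonempty_idx q.nonempty_idx
        (h21.trans (hfsub p)) hIJ q.pt hyp (hfmem q) hmem2
    refine Sigma.ext hHeq ?_
    rw [hveq]
    have : HEq (ρ (Hf p) p.idx p.pt (hfmem p)) (ρ (Hf q) p.idx p.pt hmem2') :=
      cast_heq hHeq _ _
    refine this.trans (heq_of_eq ?_)
    congr 1
    exact hρ.symm
  have hkeyE : ∀ p q : QOf V, EqvGen (Qle Vt ρ) p q →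
      (⟨Hf p, ρ (Hf p) p.idx p.pt (hfmem p)⟩ : Sigma V)
        = ⟨Hf q, ρ (Hf q) q.idx q.pt (hfmem q)⟩ := by
    intro p q h
    induction h with
    | rel p q h => exact hkey p q h
    | refl p => rfl
    | symm p q _ ih => exact ih.symm
    | trans p q r _ _ ih₁ ih₂ => exact ih₁.trans ih₂
  -- identify Hf with the given least elements
  set p : QOf V := ⟨I, hI, x⟩ with hp
  set q : QOf V := ⟨J, hJ, y⟩ with hq
  have hfp : Hf p = H₁ :=
    subset_antisymm (hfleast p H₁ hH₁ hH₁I hx) (hleast₁ (Hf p) (hfne p) (hfsub p) (hfmem p))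
  have hfq : Hf q = H₂ :=
    subset_antisymm (hfleast q H₂ hH₂ hH₂J hy) (hleast₂ (Hf q) (hfne q) (hfsub q) (hfmem q))
  constructor
  · intro h
    have := hkeyE p q h
    rw [Sigma.mk.inj_iff] at this
    obtain ⟨h1, h2⟩ := this
    refine ⟨hfp ▸ hfq ▸ h1, ?_⟩
    exact ((cast_heq hfp.symm hx (hfmem p)).trans h2).trans (cast_heq hfq (hfmem q) hy)
  · rintro ⟨rfl, h2⟩
    have h2' : ρ H₁ I x hx = ρ H₁ J y hy := eq_of_heq h2
    have e1 : Qle Vt ρ ⟨H₁, hH₁, ρ H₁ I x hx⟩ p := ⟨hH₁I, hx, rfl⟩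
    have e2 : Qle Vt ρ ⟨H₁, hH₁, ρ H₁ J y hy⟩ q := ⟨hH₂J, hy, rfl⟩
    have : (⟨H₁, hH₁, ρ H₁ I x hx⟩ : QOf V) = ⟨H₁, hH₁, ρ H₁ J y hy⟩ := by
      rw [h2']
    exact EqvGen.trans _ _ _ (EqvGen.symm _ _ (EqvGen.rel _ _ e1))
      (this ▸ EqvGen.rel _ _ e2)
end

section
/- Let (V_j)_{j ≥ 1} be a sequence of vector spaces over ℚ and let i_j : V_j → V_{j+1} be ℚ-linear maps. For each j let V_j^* := Hom_ℚ(V_j, ℚ) be the dual space and i_j^* : V_{j+1}^* → V_j^* the dual map, i_j^*(β) = β ∘ i_j. Then the linear map d : ∏_{j≥1} V_j^* → ∏_{j≥1} V_j^* defined by d((β_j)_j) = (β_j − i_j^*(β_{j+1}))_j is surjective; that is, for every family (α_j)_j with α_j ∈ V_j^* there exists a family (β_j)_j with β_j ∈ V_j^* such that α_j = β_j − β_{j+1} ∘ i_j for all j. Equivalently, the derived inverse limit lim¹ of the inverse system (V_j^*, i_j^*) vanishes. -/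
open scoped DirectSum

section Aux

variable (V : ℕ → Type*) [∀ j, AddCommGroup (V j)] [∀ j, Module ℚ (V j)]
    (i : ∀ j, V j →ₗ[ℚ] V (j + 1))

/-- The telescope map on the direct sum. -/
noncomputable def stmt18S : (⨁ j, V j) →ₗ[ℚ] ⨁ j, V j :=
  DirectSum.toModule ℚ ℕ _ (fun j =>
    DirectSum.lof ℚ ℕ V j - (DirectSum.lof ℚ ℕ V (j + 1)).comp (i j))

lemma stmt18S_comp0 (x : ⨁ j, V j) :
    DirectSum.component ℚ ℕ V 0 (stmt18S V i x) = DirectSum.component ℚ ℕ V 0 x := by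
  have h : ((DirectSum.component ℚ ℕ V 0).comp (stmt18S V i)) =
      DirectSum.component ℚ ℕ V 0 := by
    apply DirectSum.linearMap_ext
    intro j
    ext v
    simp only [LinearMap.comp_apply, stmt18S, DirectSum.toModule_lof]
    simp [DirectSum.component.of, DirectSum.component.lof_self, Nat.succ_ne_self]
  exact congrFun (congrArg DFunLike.coe h) x

lemma stmt18S_compSucc (m : ℕ) (x : ⨁ j, V j) :
    DirectSum.component ℚ ℕ V (m + 1) (stmt18S V i x) =
      DirectSum.component ℚ ℕ V (m + 1) x - i m (DirectSum.component ℚ ℕ V m x) := by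
  have h : ((DirectSum.component ℚ ℕ V (m + 1)).comp (stmt18S V i)) =
      DirectSum.component ℚ ℕ V (m + 1) - (i m).comp (DirectSum.component ℚ ℕ V m) := by
    apply DirectSum.linearMap_ext
    intro j
    ext v
    simp only [LinearMap.comp_apply, LinearMap.sub_apply, stmt18S, DirectSum.toModule_lof]
    by_cases hj : j = m
    · subst hj
      simp [DirectSum.component.of, DirectSum.component.lof_self, Nat.succ_ne_self]
    · by_cases hj' : j = m + 1
      · subst hj'
        simp [DirectSum.component.of, DirectSum.component.lof_self, Nat.succ_ne_self, hj]
      · simp [DirectSum.component.of, DirectSum.component.lof_self, Nat.succ_ne_self, hj, hj']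
  exact congrFun (congrArg DFunLike.coe h) x

lemma stmt18S_injective : Function.Injective (stmt18S V i) := by
  rw [← LinearMap.ker_eq_bot, LinearMap.ker_eq_bot']
  intro x hx
  have hcomp : ∀ k, DirectSum.component ℚ ℕ V k x = 0 := by
    intro k
    induction k with
    | zero =>
        have := stmt18S_comp0 V i x
        rw [hx] at this
        simpa using this.symm
    | succ m ih =>
        have := stmt18S_compSucc V i m x
        rw [hx, ih] at this
        simpa using this.symm
  exact DFinsupp.ext hcomp

end Aux

/-- Let `(i_j : V_j → V_{j+1})` be a direct system of `ℚ`-vector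
spaces, with dual inverse system `(i_j^* : V_{j+1}^* → V_j^*)`.  Then the map
`d : ∏ V_j^* → ∏ V_j^*`, `d(β)_j = β_j − i_j^*(β_{j+1})`, is surjective; equivalently,
the derived inverse limit `lim¹` of the dual system vanishes. -/
theorem stmt_18 (V : ℕ → Type*) [∀ j, AddCommGroup (V j)] [∀ j, Module ℚ (V j)]
    (i : ∀ j, V j →ₗ[ℚ] V (j + 1)) :
    ∀ α : ∀ j, V j →ₗ[ℚ] ℚ, ∃ β : ∀ j, V j →ₗ[ℚ] ℚ,
      ∀ j, α j = β j - (β (j + 1)).comp (i j) := by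
  intro α
  obtain ⟨g, hg⟩ := LinearMap.exists_leftInverse_of_injective (stmt18S V i)
    (LinearMap.ker_eq_bot.mpr (stmt18S_injective V i))
  set A : (⨁ j, V j) →ₗ[ℚ] ℚ := DirectSum.toModule ℚ ℕ ℚ α
  refine ⟨fun j => (A.comp g).comp (DirectSum.lof ℚ ℕ V j), fun j => ?_⟩
  ext v
  have key : g (stmt18S V i (DirectSum.lof ℚ ℕ V j v)) = DirectSum.lof ℚ ℕ V j v := by
    have := congrFun (congrArg DFunLike.coe hg) (DirectSum.lof ℚ ℕ V j v)
    simpa using this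
  have hS : stmt18S V i (DirectSum.lof ℚ ℕ V j v) =
      DirectSum.lof ℚ ℕ V j v - DirectSum.lof ℚ ℕ V (j + 1) (i j v) := by
    simp [stmt18S, DirectSum.toModule_lof]
  rw [hS] at key
  have : A (g (DirectSum.lof ℚ ℕ V j v) - g (DirectSum.lof ℚ ℕ V (j + 1) (i j v))) =
      A (DirectSum.lof ℚ ℕ V j v) := by
    rw [← map_sub g, key]
  simp only [map_sub] at this
  simpa [A, DirectSum.toModule_lof] using this.symm
end

section
/- Let U be a topological space, U′ ⊆ U an open subset, and G a group with at least two elements acting on U′ such that every g ∈ G acts by a homeomorphism of U′ and the action is free (g•x = x for some x ∈ U′ implies g = 1). Let Ṽ ⊆ U′ be a G-invariant subset that is open in U, whose closure in U is contained in U′ and strictly larger than Ṽ. Let ∼ be the equivalence relation on U generated by y ∼ g•y for y ∈ Ṽ and g ∈ G. Then the quotient space U/∼, with the quotient topology, is not Hausdorff. More precisely, for any point x in the frontier closure_U(Ṽ) ∖ Ṽ and any g ∈ G with g ≠ 1, the classes [x] and [g•x] are distinct points of U/∼ such that every neighborhood of [x] intersects every neighborhood of [g•x]. -/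
/-- The relation on `X` generated by gluing in a partial group action: `a ∼ b` when
there are `g ∈ G` and `y ∈ Ṽ` with `a = y` and `b = g • y`. -/
def glueRel {X : Type*} (G : Type*) [Group G] (U' : Set X) [MulAction G ↥U']
    (Vt : Set X) : X → X → Prop :=
  fun a b => ∃ (g : G) (y : ↥U'),
    (y : X) ∈ Vt ∧ a = (y : X) ∧ b = ((g • y : ↥U') : X)

/-- Let `U'` be an open subset of a topological space `X`, and let a
group `G` with at least two elements act freely and by homeomorphisms on `U'`.  Let
`Ṽ ⊆ U'` be a `G`-invariant subset, open in `X`, whose closure in `X` is contained in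
`U'` and strictly larger than `Ṽ`.  Let `∼` be the equivalence relation generated by
`y ∼ g • y` for `y ∈ Ṽ`.  Then the quotient `X/∼` is not Hausdorff; more precisely,
for any `x` in the frontier `closure Ṽ ∖ Ṽ` and any `g ≠ 1`, the classes `[x]` and
`[g • x]` are distinct points every two neighbourhoods of which intersect. -/
theorem stmt_19 {X : Type*} [TopologicalSpace X] {G : Type*} [Group G] [Nontrivial G]
    (U' : Set X) (hU' : IsOpen U') [MulAction G ↥U']
    (hcont : ∀ g : G, Continuous fun y : ↥U' => g • y)
    (hfree : ∀ (g : G) (y : ↥U'), g • y = y → g = 1)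
    (Vt : Set X) (hVtU' : Vt ⊆ U') (hVtopen : IsOpen Vt)
    (hVtinv : ∀ (g : G) (y : ↥U'), (y : X) ∈ Vt → ((g • y : ↥U') : X) ∈ Vt)
    (hclosure : closure Vt ⊆ U') (hstrict : Vt ⊂ closure Vt) :
    ¬ T2Space (Quot (glueRel G U' Vt)) ∧
    ∀ (x : X) (hx : x ∈ closure Vt \ Vt) (g : G), g ≠ 1 →
      Quot.mk (glueRel G U' Vt) x ≠
        Quot.mk (glueRel G U' Vt) ((g • (⟨x, hclosure hx.1⟩ : ↥U') : ↥U') : X) ∧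
      ∀ N₁ ∈ nhds (Quot.mk (glueRel G U' Vt) x),
        ∀ N₂ ∈ nhds (Quot.mk (glueRel G U' Vt)
            ((g • (⟨x, hclosure hx.1⟩ : ↥U') : ↥U') : X)),
          (N₁ ∩ N₂).Nonempty := by
  -- Bound on the equivalence closure of `glueRel`
  have E_of : ∀ a b : X, Relation.EqvGen (glueRel G U' Vt) a b →
      a = b ∨ ∃ (ha : a ∈ U') (hb : b ∈ U') (g : G),
        a ∈ Vt ∧ (⟨b, hb⟩ : ↥U') = g • (⟨a, ha⟩ : ↥U') := by
    intro a b h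
    induction h with
    | rel a b hab =>
      obtain ⟨g, y, hy, rfl, rfl⟩ := hab
      exact Or.inr ⟨y.2, (g • y).2, g, hy, rfl⟩
    | refl a => exact Or.inl rfl
    | symm a b h ih =>
      rcases ih with rfl | ⟨ha, hb, g, haVt, heq⟩
      · exact Or.inl rfl
      · have hbVt : b ∈ Vt := by
          have := hVtinv g ⟨a, ha⟩ haVt
          rwa [← heq] at this
        refine Or.inr ⟨hb, ha, g⁻¹, hbVt, ?_⟩
        rw [heq, inv_smul_smul]
    | trans a b c hab hbc ihab ihbc =>
      rcases ihab with rfl | ⟨ha, hb, g, haVt, h1⟩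
      · exact ihbc
      · rcases ihbc with rfl | ⟨hb', hc, g', hbVt, h2⟩
        · exact Or.inr ⟨ha, hb, g, haVt, h1⟩
        · refine Or.inr ⟨ha, hc, g' * g, haVt, ?_⟩
          rw [h2, show (⟨b, hb'⟩ : ↥U') = g • (⟨a, ha⟩ : ↥U') from h1, smul_smul]
  have key : ∀ (x : X) (hx : x ∈ closure Vt \ Vt) (g : G), g ≠ 1 →
      Quot.mk (glueRel G U' Vt) x ≠
        Quot.mk (glueRel G U' Vt) ((g • (⟨x, hclosure hx.1⟩ : ↥U') : ↥U') : X) ∧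
      ∀ N₁ ∈ nhds (Quot.mk (glueRel G U' Vt) x),
        ∀ N₂ ∈ nhds (Quot.mk (glueRel G U' Vt)
            ((g • (⟨x, hclosure hx.1⟩ : ↥U') : ↥U') : X)),
          (N₁ ∩ N₂).Nonempty := by
    intro x hx g hg
    set x' : ↥U' := ⟨x, hclosure hx.1⟩ with hx'def
    constructor
    · intro h
      rcases E_of _ _ (Quot.eqvGen_exact h) with heq | ⟨ha, hb, g', haVt, _⟩
      · exact hg (hfree g x' (Subtype.ext heq.symm))
      · exact hx.2 haVt
    · intro N₁ hN₁ N₂ hN₂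
      have h₁ : Quot.mk (glueRel G U' Vt) ⁻¹' N₁ ∈ nhds x :=
        (continuous_quot_mk (r := glueRel G U' Vt)).continuousAt.preimage_mem_nhds hN₁
      have h₂ : Quot.mk (glueRel G U' Vt) ⁻¹' N₂ ∈ nhds ((g • x' : ↥U') : X) :=
        (continuous_quot_mk (r := glueRel G U' Vt)).continuousAt.preimage_mem_nhds hN₂
      obtain ⟨W₁, hW₁sub, hW₁open, hxW₁⟩ := mem_nhds_iff.mp h₁
      obtain ⟨W₂, hW₂sub, hW₂open, hxW₂⟩ := mem_nhds_iff.mp h₂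
      have hfcont : Continuous (fun y : ↥U' => ((g • y : ↥U') : X)) :=
        continuous_subtype_val.comp (hcont g)
      have hO : IsOpen ((fun y : ↥U' => ((g • y : ↥U') : X)) ⁻¹' W₂) :=
        hW₂open.preimage hfcont
      have hopenIm : IsOpen (Subtype.val '' ((fun y : ↥U' => ((g • y : ↥U') : X)) ⁻¹' W₂)) :=
        hU'.isOpenMap_subtype_val _ hO
      have hxmem : x ∈ W₁ ∩ Subtype.val '' ((fun y : ↥U' => ((g • y : ↥U') : X)) ⁻¹' W₂) :=
        ⟨hxW₁, ⟨x', hxW₂, rfl⟩⟩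
      obtain ⟨z, ⟨hzW₁, hzIm⟩, hzVt⟩ :=
        mem_closure_iff.mp hx.1 _ (hW₁open.inter hopenIm) hxmem
      obtain ⟨z', hz'W₂, hz'val⟩ := hzIm
      have hz'Vt : (z' : X) ∈ Vt := by rw [hz'val]; exact hzVt
      have hsound : Quot.mk (glueRel G U' Vt) z =
          Quot.mk (glueRel G U' Vt) ((g • z' : ↥U') : X) :=
        Quot.sound ⟨g, z', hz'Vt, hz'val.symm, rfl⟩
      refine ⟨Quot.mk (glueRel G U' Vt) z, hW₁sub hzW₁, ?_⟩
      rw [hsound]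
      exact hW₂sub hz'W₂
  refine ⟨?_, key⟩
  intro hT2
  obtain ⟨x, hx1, hx2⟩ := Set.exists_of_ssubset hstrict
  obtain ⟨g, hg⟩ := exists_ne (1 : G)
  obtain ⟨hne, hint⟩ := key x ⟨hx1, hx2⟩ g hg
  obtain ⟨u, v, hu, hv, hpu, hqv, hd⟩ := t2_separation hne
  obtain ⟨w, hw⟩ := hint u (hu.mem_nhds hpu) v (hv.mem_nhds hqv)
  exact hd.le_bot hw
end
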